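/- arXiv:math/0611085 — 7 statements merged into one kernel-verified Lean document; each statement's English description precedes it below -/
import Mathlib

section
/- Let 𝔤 be a finite-dimensional Lie algebra over an algebraically closed field K of characteristic 0, let 𝔞 ⊆ 𝔤 be an ideal, and let p be an element of the symmetric algebra S(𝔤), viewed as a polynomial function on 𝔤*. Then p is invariant under the adjoint action of 𝔞 on S(𝔤) if and only if for every x in a nonempty Zariski-open subset of 𝔤*, the differential dp(x) ∈ 𝔤 annihilates the coadjoint action restricted to 𝔞, i.e. dp(x) lies in the stabilizer in 𝔤 of the restriction of x to 𝔞. -/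
noncomputable section

open MvPolynomial

variable {K : Type} [Field K] [IsAlgClosed K] [CharZero K]
variable {L : Type} [LieRing L] [LieAlgebra K L]
variable {ι : Type} [Fintype ι] [DecidableEq ι]

/-- The canonical image of `v : L` in the symmetric algebra `S(𝔤) = K[Xᵢ : i]`,
realized via the basis `b`. -/
def toPoly (b : Module.Basis ι K L) (v : L) : MvPolynomial ι K :=
  ∑ i, MvPolynomial.C (b.repr v i) * MvPolynomial.X i

/-- The adjoint action of `v : 𝔤` on the symmetric algebra `S(𝔤)`, extended
from the adjoint action on `𝔤` as a derivation: `p ↦ ⁅v, p⁆`. -/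
def adS (b : Module.Basis ι K L) (v : L) (p : MvPolynomial ι K) : MvPolynomial ι K :=
  MvPolynomial.mkDerivation K (fun i => toPoly b ⁅v, b i⁆) p

/-- Evaluation of `p ∈ S(𝔤)` (a polynomial function on `𝔤*`) at `x ∈ 𝔤*`. -/
def evalD (b : Module.Basis ι K L) (x : Module.Dual K L) (p : MvPolynomial ι K) : K :=
  MvPolynomial.eval (fun i => x (b i)) p

/-- The differential `dp(x) ∈ 𝔤` of `p ∈ S(𝔤)` at the point `x ∈ 𝔤*`. -/
def dP (b : Module.Basis ι K L) (p : MvPolynomial ι K) (x : Module.Dual K L) : L :=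
  ∑ i, (evalD b x (MvPolynomial.pderiv i p)) • b i

/-- The coadjoint stabilizer `𝔤(x)` of `x ∈ 𝔤*`. -/
def coadStab (x : Module.Dual K L) : Submodule K L where
  carrier := {v : L | ∀ w : L, x ⁅v, w⁆ = 0}
  add_mem' := by
    intro a b ha hb; intro w
    rw [Set.mem_setOf_eq] at ha hb
    rw [add_lie, map_add, ha, hb, add_zero]
  zero_mem' := by intro w; rw [zero_lie, map_zero]
  smul_mem' := by
    intro c a ha w
    rw [Set.mem_setOf_eq] at ha
    rw [smul_lie, map_smul, ha, smul_zero]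

/-- The index of `𝔤`: the minimal dimension of a coadjoint stabilizer. -/
def lieIndex (K L : Type) [Field K] [LieRing L] [LieAlgebra K L] : ℕ :=
  ⨅ x : Module.Dual K L, Module.finrank K (coadStab (K := K) (L := L) x)

lemma eval_toPoly (b : Module.Basis ι K L) (x : Module.Dual K L) (w : L) :
    evalD b x (toPoly b w) = x w := by
  unfold evalD toPoly
  conv_rhs => rw [← b.sum_repr w]
  rw [map_sum, map_sum]
  simp

lemma eval_mkDerivation (g : ι → K) (f : ι → MvPolynomial ι K) (p : MvPolynomial ι K) :
    eval g (mkDerivation K f p) = ∑ i, eval g (pderiv i p) * eval g (f i) := by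
  induction p using MvPolynomial.induction_on with
  | C a => simp [show (C a : MvPolynomial ι K) = algebraMap K _ a from rfl,
      Derivation.map_algebraMap]
  | add p q hp hq => simp [hp, hq, add_mul, Finset.sum_add_distrib]
  | mul_X p i hp =>
    rw [Derivation.leibniz, mkDerivation_X]
    simp only [smul_eq_mul, map_add, map_mul, eval_X, hp, pderiv_mul, pderiv_X, add_mul,
      Finset.sum_add_distrib]
    have h2 : ∑ j, (eval g) p * (eval g) ((Pi.single (M := fun _ : ι => MvPolynomial ι K) j 1) i) * eval g (f j)
        = eval g p * eval g (f i) := by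
      rw [Finset.sum_eq_single i]
      · simp
      · intro j _ hj; simp [Pi.single_apply, Ne.symm hj]
      · simp
    rw [h2, add_comm]
    congr 1
    rw [Finset.mul_sum]
    exact Finset.sum_congr rfl fun j _ => by ring

lemma eval_adS (b : Module.Basis ι K L) (x : Module.Dual K L) (v : L) (p : MvPolynomial ι K) :
    evalD b x (adS b v p) = x ⁅v, dP b p x⁆ := by
  unfold adS dP
  rw [show evalD b x (mkDerivation K (fun i => toPoly b ⁅v, b i⁆) p)
      = eval (fun i => x (b i)) (mkDerivation K (fun i => toPoly b ⁅v, b i⁆) p) from rfl,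
    eval_mkDerivation]
  rw [show ⁅v, ∑ i, evalD b x (pderiv i p) • b i⁆
      = LieAlgebra.ad K L v (∑ i, evalD b x (pderiv i p) • b i) from rfl, map_sum, map_sum]
  refine Finset.sum_congr rfl fun i _ => ?_
  rw [map_smul, map_smul, LieAlgebra.ad_apply]
  rw [show eval (fun i => x (b i)) (toPoly b ⁅v, b i⁆) = evalD b x (toPoly b ⁅v, b i⁆) from rfl,
    eval_toPoly]
  simp [evalD, mul_comm]

/-- For an ideal `𝔞 ⊆ 𝔤` and `p ∈ S(𝔤)`: `p` is invariant under the
adjoint action of `𝔞` iff for every `x` in a nonempty Zariski-open subset of `𝔤*`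
(i.e. on the nonvanishing locus of some nonzero polynomial `q`), the differential
`dp(x)` lies in the stabilizer in `𝔤` of the restriction of `x` to `𝔞`. -/
theorem statement0 (b : Module.Basis ι K L) (I : LieIdeal K L) (p : MvPolynomial ι K) :
    (∀ v ∈ I, adS b v p = 0) ↔
      ∃ q : MvPolynomial ι K, q ≠ 0 ∧
        ∀ x : Module.Dual K L, evalD b x q ≠ 0 →
          ∀ a ∈ I, x ⁅dP b p x, a⁆ = 0 := by
  constructor
  · intro h
    refine ⟨1, one_ne_zero, fun x _ a ha => ?_⟩
    have h1 := eval_adS b x a p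
    rw [h a ha] at h1
    simp only [evalD, map_zero] at h1
    rw [← lie_skew, map_neg, ← h1, neg_zero]
  · rintro ⟨q, hq, hx⟩ v hv
    have key : q * adS b v p = 0 := by
      apply MvPolynomial.funext
      intro g
      set x : Module.Dual K L := b.constr K g with hxdef
      have hgb : (fun i => x (b i)) = g := by
        funext i; simp [hxdef, Module.Basis.constr_basis]
      rw [map_mul, map_zero]
      by_cases h0 : eval g q = 0
      · rw [h0, zero_mul]
      · have h0' : evalD b x q ≠ 0 := by rwa [evalD, hgb]
        have h2 : eval g (adS b v p) = x ⁅v, dP b p x⁆ := by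
          rw [← eval_adS b x v p, evalD, hgb]
        rw [h2, ← lie_skew, map_neg, hx x h0' v hv, neg_zero, mul_zero]
    rcases mul_eq_zero.mp key with h | h
    · exact absurd h hq
    · exact h
end
end

section
/- Let 𝔤 be a finite-dimensional Lie algebra over an algebraically closed field K of characteristic 0 and let 𝔞 ⊆ 𝔤 be a Lie subalgebra (in particular an ideal). An element p of the symmetric algebra S(𝔤) lies in the subalgebra S(𝔞) if and only if for every x in a nonempty Zariski-open subset of 𝔤*, the differential dp(x) lies in 𝔞. -/
set_option linter.unusedSectionVars false
set_option synthInstance.maxHeartbeats 1000000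
set_option maxHeartbeats 1000000


noncomputable section

open MvPolynomial

variable {K : Type} [Field K] [IsAlgClosed K] [CharZero K]
variable {L : Type} [LieRing L] [LieAlgebra K L]
variable {ι : Type} [Fintype ι] [DecidableEq ι]

namespace S1Aux

variable {K : Type} [Field K]
variable {σ : Type} [Fintype σ] [DecidableEq σ]

/-- linear polynomial attached to a coefficient vector, as a linear map -/
def linP : (σ → K) →ₗ[K] MvPolynomial σ K where
  toFun c := ∑ i, MvPolynomial.C (c i) * MvPolynomial.X i
  map_add' c d := by simp [add_mul, Finset.sum_add_distrib]
  map_smul' a c := by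
    simp [MvPolynomial.smul_eq_C_mul, Finset.mul_sum, mul_assoc]

lemma linP_apply (c : σ → K) : linP c = ∑ i, MvPolynomial.C (c i) * MvPolynomial.X i := rfl

lemma linP_single (i : σ) : linP (Pi.single i (1:K)) = X i := by
  rw [linP_apply, Finset.sum_eq_single i]
  · simp
  · intro j _ hj; simp [Pi.single_eq_of_ne hj]
  · simp

lemma pderiv_linP (t : σ) (c : σ → K) : pderiv t (linP c) = C (c t) := by
  rw [linP_apply, map_sum, Finset.sum_eq_single t]
  · simp
  · intro j _ hj; simp [pderiv_C_mul, pderiv_X_of_ne hj]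
  · simp

lemma aeval_linP {A : Type*} [CommSemiring A] [Algebra K A] (f : σ → A) (c : σ → K) :
    aeval f (linP c) = ∑ i, algebraMap K A (c i) * f i := by
  rw [linP_apply]; simp

lemma eval_linP (y : σ → K) (c : σ → K) : eval y (linP c) = ∑ i, c i * y i := by
  rw [linP_apply]; simp

lemma sum_smul_single (m : σ → K) : ∑ i, m i • (Pi.single i 1 : σ → K) = m := by
  funext j
  rw [Finset.sum_apply, Finset.sum_eq_single j]
  · simp
  · intro i _ hi; rw [Pi.smul_apply, Pi.single_eq_of_ne hi.symm, smul_zero]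
  · simp

/-- directional derivative -/
def dDer (c : σ → K) (p : MvPolynomial σ K) : MvPolynomial σ K :=
  ∑ i, MvPolynomial.C (c i) * pderiv i p

lemma dDer_C (c : σ → K) (a : K) : dDer c (C a) = 0 := by simp [dDer]

lemma dDer_add (c : σ → K) (p q : MvPolynomial σ K) :
    dDer c (p + q) = dDer c p + dDer c q := by
  simp [dDer, mul_add, Finset.sum_add_distrib]

lemma dDer_X (c : σ → K) (t : σ) : dDer c (X t) = C (c t) := by
  rw [dDer, Finset.sum_eq_single t]
  · simp
  · intro j _ hj; rw [pderiv_X_of_ne hj.symm, mul_zero]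
  · simp

lemma dDer_mul (c : σ → K) (p q : MvPolynomial σ K) :
    dDer c (p * q) = dDer c p * q + p * dDer c q := by
  simp only [dDer, pderiv_mul, mul_add, Finset.sum_add_distrib, Finset.sum_mul, Finset.mul_sum]
  congr 1
  · apply Finset.sum_congr rfl; intros; ring
  · apply Finset.sum_congr rfl; intros; ring

lemma eval_dDer (y : σ → K) (c : σ → K) (p : MvPolynomial σ K) :
    eval y (dDer c p) = ∑ i, c i * eval y (pderiv i p) := by
  simp [dDer]


lemma coeff_pderiv (i : σ) (m : σ →₀ ℕ) (q : MvPolynomial σ K) :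
    coeff m (pderiv i q) = ((m i : K) + 1) * coeff (m + Finsupp.single i 1) q := by
  induction q using MvPolynomial.induction_on' with
  | add p q hp hq => rw [map_add, coeff_add, coeff_add, hp, hq, mul_add]
  | monomial s a =>
    rw [pderiv_monomial, coeff_monomial, coeff_monomial]
    by_cases h : s = m + Finsupp.single i 1
    · subst h
      rw [if_pos (add_tsub_cancel_right _ _), if_pos rfl]
      simp [mul_comm]
    · rw [if_neg h, mul_zero]
      by_cases hs : s i = 0
      · split_ifs <;> simp [hs]
      · have hle : Finsupp.single i 1 ≤ s := by
          rw [Finsupp.single_le_iff]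
          exact Nat.one_le_iff_ne_zero.mpr hs
        rw [if_neg]
        intro hc
        exact h ((tsub_eq_iff_eq_add_of_le hle).mp hc)

lemma vars_subset_of_pderiv_eq_zero [CharZero K] {s : Set σ} {q : MvPolynomial σ K}
    (h : ∀ i ∉ s, pderiv i q = 0) : ↑q.vars ⊆ s := by
  intro i hi
  by_contra his
  rw [Finset.mem_coe, mem_vars] at hi
  obtain ⟨m, hm, him⟩ := hi
  have h1 := coeff_pderiv (K := K) i (m - Finsupp.single i 1) q
  rw [h i his, coeff_zero] at h1
  have hle : Finsupp.single i 1 ≤ m := by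
    rw [Finsupp.single_le_iff]
    exact Nat.one_le_iff_ne_zero.mpr (Finsupp.mem_support_iff.mp him)
  rw [tsub_add_cancel_of_le hle] at h1
  have h2 : coeff m q = 0 := by
    rcases mul_eq_zero.mp h1.symm with h3 | h3
    · exact absurd h3 (Nat.cast_add_one_ne_zero _)
    · exact h3
  exact mem_support_iff.mp hm h2


lemma repr_sum {τ : Type*} [Fintype τ] (d : Module.Basis τ K (σ → K)) (v : σ → K) (t : τ) :
    d.repr v t = ∑ i, v i * d.repr (Pi.single i 1) t := by
  conv_lhs => rw [← sum_smul_single v]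
  rw [map_sum, Finsupp.finset_sum_apply]
  exact Finset.sum_congr rfl fun i _ => by rw [map_smul, Finsupp.smul_apply, smul_eq_mul]

theorem mem_adjoin_linP_of_dDer [CharZero K] {M : Submodule K (σ → K)} {p : MvPolynomial σ K}
    (h : ∀ c : σ → K, (∀ m ∈ M, ∑ i, c i * m i = 0) → dDer c p = 0) :
    p ∈ Algebra.adjoin K (linP '' (M : Set (σ → K))) := by
  obtain ⟨N, hN⟩ := M.exists_isCompl
  set bM := Module.finBasis K M with hbM
  set bN := Module.finBasis K N with hbN
  set e := Submodule.prodEquivOfIsCompl M N hN with he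
  set d : Module.Basis (Fin (Module.finrank K M) ⊕ Fin (Module.finrank K N)) K (σ → K) :=
    (bM.prod bN).map e with hd
  -- repr of elements of M has no inr components
  have hrepr : ∀ m ∈ M, ∀ j, d.repr m (Sum.inr j) = 0 := by
    intro m hm j
    rw [hd, Module.Basis.map_repr, LinearEquiv.trans_apply]
    have hsymm : e.symm m = ((⟨m, hm⟩ : ↥M), (0 : ↥N)) := by
      rw [LinearEquiv.symm_apply_eq, he, Submodule.coe_prodEquivOfIsCompl']
      simp
    rw [hsymm, Module.Basis.prod_repr_inr]
    simp
  -- the algebra maps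
  set Φ : MvPolynomial (Fin (Module.finrank K M) ⊕ Fin (Module.finrank K N)) K →ₐ[K]
      MvPolynomial σ K := aeval (fun s => linP (d s)) with hPhi
  set Ψ : MvPolynomial σ K →ₐ[K]
      MvPolynomial (Fin (Module.finrank K M) ⊕ Fin (Module.finrank K N)) K :=
    aeval (fun i => linP (fun t => d.repr (Pi.single i 1) t)) with hPsi
  have hPsiX : ∀ i, Ψ (X i) = linP (fun t => d.repr (Pi.single i 1) t) := fun i => aeval_X _ i
  have hPhiPsi : ∀ q, Φ (Ψ q) = q := by
    intro q
    have hcomp : Φ.comp Ψ = AlgHom.id K (MvPolynomial σ K) := by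
      apply algHom_ext
      intro i
      rw [AlgHom.comp_apply, hPsiX, AlgHom.id_apply]
      rw [hPhi, aeval_linP]
      calc ∑ s, algebraMap K (MvPolynomial σ K) (d.repr (Pi.single i 1) s) * linP (d s)
          = ∑ s, linP (d.repr (Pi.single i 1) s • d s) := by
            refine Finset.sum_congr rfl fun s _ => ?_
            rw [map_smul, algebraMap_eq, ← smul_eq_C_mul]
        _ = linP (∑ s, d.repr (Pi.single i 1) s • d s) := (map_sum _ _ _).symm
        _ = linP (Pi.single i 1) := by rw [Module.Basis.sum_repr]
        _ = X i := linP_single i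
    calc Φ (Ψ q) = (Φ.comp Ψ) q := rfl
      _ = q := by rw [hcomp]; rfl
  -- the directional derivatives corresponding to inr coordinates
  have hpd : ∀ j, pderiv (Sum.inr j) (Ψ p) = 0 := by
    intro j
    set c : σ → K := fun i => d.repr (Pi.single i 1) (Sum.inr j) with hc
    have key : ∀ q : MvPolynomial σ K, pderiv (Sum.inr j) (Ψ q) = Ψ (dDer c q) := by
      intro q
      induction q using MvPolynomial.induction_on with
      | C a => rw [dDer_C, map_zero, aeval_C, algebraMap_eq, pderiv_C]
      | add q r hq hr => rw [map_add, map_add, hq, hr, dDer_add, map_add]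
      | mul_X q i hq =>
        rw [map_mul, pderiv_mul, hq, dDer_mul, dDer_X, map_add, map_mul, map_mul]
        congr 1
        rw [hPsiX, pderiv_linP, aeval_C, algebraMap_eq]
    rw [key p, h c, map_zero]
    intro m hm
    rw [← hrepr m hm j, repr_sum d m (Sum.inr j)]
    exact Finset.sum_congr rfl fun i _ => mul_comm _ _
  -- Ψ p only involves inl variables
  have hvars : ↑(Ψ p).vars ⊆ Set.range (Sum.inl :
      Fin (Module.finrank K M) → Fin (Module.finrank K M) ⊕ Fin (Module.finrank K N)) := by
    apply vars_subset_of_pderiv_eq_zero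
    intro i hi
    cases i with
    | inl k => exact absurd ⟨k, rfl⟩ hi
    | inr j => exact hpd j
  have hmem : Ψ p ∈ Algebra.adjoin K
      (X '' Set.range (Sum.inl : Fin (Module.finrank K M) →
        Fin (Module.finrank K M) ⊕ Fin (Module.finrank K N))) := by
    rw [← supported_eq_adjoin_X]
    exact mem_supported.mpr hvars
  have : p ∈ (Algebra.adjoin K (X '' Set.range (Sum.inl : Fin (Module.finrank K M) →
      Fin (Module.finrank K M) ⊕ Fin (Module.finrank K N)))).map Φ :=
    ⟨Ψ p, hmem, hPhiPsi p⟩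
  rw [AlgHom.map_adjoin] at this
  refine Algebra.adjoin_mono ?_ this
  rintro _ ⟨_, ⟨_, ⟨k, rfl⟩, rfl⟩, rfl⟩
  refine ⟨d (Sum.inl k), ?_, by rw [hPhi, aeval_X]⟩
  have : d (Sum.inl k) = ↑(bM k) := by
    rw [hd, Module.Basis.map_apply, he, Submodule.coe_prodEquivOfIsCompl']
    rw [Module.Basis.prod_apply_inl_fst, Module.Basis.prod_apply_inl_snd]
    simp
  rw [this]
  exact (bM k).2

end S1Aux


section MainGlue

variable (b : Module.Basis ι K L)

lemma toPoly_eq_linP (v : L) : toPoly b v = S1Aux.linP (fun i => b.repr v i) := rfl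

lemma evalD_C (x : Module.Dual K L) (a : K) : evalD b x (MvPolynomial.C a) = a := by
  simp [evalD]

lemma evalD_add (x : Module.Dual K L) (p q : MvPolynomial ι K) :
    evalD b x (p + q) = evalD b x p + evalD b x q := by simp [evalD]

lemma evalD_mul (x : Module.Dual K L) (p q : MvPolynomial ι K) :
    evalD b x (p * q) = evalD b x p * evalD b x q := by simp [evalD]

lemma dP_add (p q : MvPolynomial ι K) (x : Module.Dual K L) :
    dP b (p + q) x = dP b p x + dP b q x := by
  rw [dP, dP, dP, ← Finset.sum_add_distrib]
  refine Finset.sum_congr rfl fun i _ => ?_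
  rw [map_add, evalD_add, add_smul]

lemma dP_C (a : K) (x : Module.Dual K L) : dP b (MvPolynomial.C a) x = 0 := by
  rw [dP]
  refine Finset.sum_eq_zero fun i _ => ?_
  rw [pderiv_C]
  show evalD b x 0 • b i = 0
  rw [evalD, map_zero, zero_smul]

lemma dP_mul (p q : MvPolynomial ι K) (x : Module.Dual K L) :
    dP b (p * q) x = evalD b x q • dP b p x + evalD b x p • dP b q x := by
  rw [dP, dP, dP, Finset.smul_sum, Finset.smul_sum, ← Finset.sum_add_distrib]
  refine Finset.sum_congr rfl fun i _ => ?_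
  rw [smul_smul, smul_smul, ← add_smul]
  congr 1
  rw [pderiv_mul, evalD_add, evalD_mul, evalD_mul]
  ring

lemma dP_toPoly (v : L) (x : Module.Dual K L) : dP b (toPoly b v) x = v := by
  rw [dP]
  have h : ∀ i, evalD b x (MvPolynomial.pderiv i (toPoly b v)) = b.repr v i := by
    intro i
    rw [toPoly_eq_linP, S1Aux.pderiv_linP, evalD_C]
  calc ∑ i, evalD b x (MvPolynomial.pderiv i (toPoly b v)) • b i
      = ∑ i, b.repr v i • b i := Finset.sum_congr rfl fun i _ => by rw [h i]
    _ = v := b.sum_repr v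

lemma dP_mem_of_mem_adjoin (A : LieSubalgebra K L) {p : MvPolynomial ι K}
    (hp : p ∈ Algebra.adjoin K (toPoly b '' (A : Set L))) (x : Module.Dual K L) :
    dP b p x ∈ A := by
  induction hp using Algebra.adjoin_induction with
  | mem y hy =>
    obtain ⟨a, ha, rfl⟩ := hy
    rw [dP_toPoly]
    exact ha
  | algebraMap r =>
    rw [MvPolynomial.algebraMap_eq, dP_C]
    exact A.zero_mem
  | add p q hp hq hp' hq' =>
    rw [dP_add]
    exact A.add_mem hp' hq'
  | mul p q hp hq hp' hq' =>
    rw [dP_mul]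
    exact A.add_mem (A.smul_mem _ hp') (A.smul_mem _ hq')

end MainGlue

/-- For a Lie subalgebra `𝔞 ⊆ 𝔤`, an element `p ∈ S(𝔤)` lies in the
subalgebra `S(𝔞)` (the subalgebra of `S(𝔤)` generated by `𝔞`) iff for every `x` in a
nonempty Zariski-open subset of `𝔤*`, the differential `dp(x)` lies in `𝔞`. -/
theorem statement1 (b : Module.Basis ι K L) (A : LieSubalgebra K L) (p : MvPolynomial ι K) :
    p ∈ Algebra.adjoin K (toPoly b '' (A : Set L)) ↔
      ∃ q : MvPolynomial ι K, q ≠ 0 ∧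
        ∀ x : Module.Dual K L, evalD b x q ≠ 0 → dP b p x ∈ A := by
  constructor
  · intro hp
    exact ⟨1, one_ne_zero, fun x _ => dP_mem_of_mem_adjoin b A hp x⟩
  · rintro ⟨q, hq, hx⟩
    set Msub : Submodule K (ι → K) := A.toSubmodule.map b.equivFun.toLinearMap with hMsub
    have himg : toPoly b '' (A : Set L) = S1Aux.linP '' (Msub : Set (ι → K)) := by
      rw [hMsub, Submodule.map_coe]
      rw [Set.image_image]
      refine Set.image_congr fun a _ => ?_
      rw [toPoly_eq_linP]
      congr 1
    rw [himg]
    apply S1Aux.mem_adjoin_linP_of_dDer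
    intro c hc
    have hzero : S1Aux.dDer c p * q = 0 := by
      apply MvPolynomial.funext
      intro y
      rw [map_zero, map_mul]
      set x : Module.Dual K L := b.constr K y with hxdef
      have hxy : ∀ i, x (b i) = y i := fun i => b.constr_basis K y i
      have heval : ∀ r : MvPolynomial ι K, evalD b x r = MvPolynomial.eval y r := by
        intro r
        have hfun : (fun i => x (b i)) = y := funext hxy
        rw [evalD, hfun]
      by_cases h0 : MvPolynomial.eval y q = 0
      · rw [h0, mul_zero]
      · have hA : dP b p x ∈ A := hx x (by rw [heval]; exact h0)
        have hrepr : ∀ i, b.repr (dP b p x) i = MvPolynomial.eval y (MvPolynomial.pderiv i p) := by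
          intro i
          rw [dP, b.repr_sum_self]
          exact heval _
        have hr : MvPolynomial.eval y (S1Aux.dDer c p) = 0 := by
          rw [S1Aux.eval_dDer]
          have hmem : (fun i => b.repr (dP b p x) i) ∈ Msub :=
            ⟨dP b p x, hA, by funext i; rw [LinearEquiv.coe_coe, b.equivFun_apply]⟩
          have := hc _ hmem
          calc ∑ i, c i * MvPolynomial.eval y (MvPolynomial.pderiv i p)
              = ∑ i, c i * b.repr (dP b p x) i :=
                Finset.sum_congr rfl fun i _ => by rw [hrepr i]
            _ = 0 := this
        rw [hr, zero_mul]
    rcases mul_eq_zero.mp hzero with h | h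
    · exact h
    · exact absurd h hq
end
end

section
/- Let 𝔤 be a finite-dimensional Lie algebra over an algebraically closed field of characteristic 0 and let p be a nonzero invariant element of the fraction field of S(𝔤) (that is, [v,p]=0 for all v ∈ 𝔤 where the adjoint action is extended to the fraction field by derivations). Write p = a₁^{m₁}···a_k^{m_k} with aᵢ pairwise non-associate prime elements of S(𝔤) and mᵢ nonzero integers. Then each aᵢ is a semi-invariant of S(𝔤), i.e. for each i there exists a linear form λᵢ on 𝔤 with [v, aᵢ] = λᵢ(v)·aᵢ for all v ∈ 𝔤. -/
noncomputable section

open MvPolynomial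

variable {K : Type} [Field K] [IsAlgClosed K] [CharZero K]
variable {L : Type} [LieRing L] [LieAlgebra K L]
variable {ι : Type} [Fintype ι] [DecidableEq ι]

set_option linter.unusedSectionVars false in
lemma sumid_eq_degree (d : ι →₀ ℕ) : (d.sum fun _ e => e) = d.degree := by
  simp [Finsupp.sum, Finsupp.degree]; rfl

set_option linter.unusedSectionVars false in
lemma degree_add' (u v : ι →₀ ℕ) : (u + v).degree = u.degree + v.degree := by
  have h := Finsupp.degree_eq_weight_one (σ := ι) (R := ℕ)
  rw [h]; exact map_add _ u v

set_option linter.unusedSectionVars false in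
lemma eq_C_of_totalDegree_eq_zero {p : MvPolynomial ι K} (h : p.totalDegree = 0) :
    p = C (coeff 0 p) := by
  ext d
  by_cases hd : d = 0
  · subst hd; simp [coeff_C]
  · rw [coeff_C, if_neg (by exact fun hh => hd hh.symm)]
    by_contra hne
    have := (totalDegree_eq_zero_iff ι p).mp h d (mem_support_iff.2 hne)
    exact hd (Finsupp.ext fun x => this x)

set_option linter.unusedSectionVars false in
lemma top_ne_zero {p : MvPolynomial ι K} (hp : p ≠ 0) :
    homogeneousComponent p.totalDegree p ≠ 0 := by
  obtain ⟨d, hd, hsup⟩ := Finset.exists_mem_eq_sup _ (support_nonempty.mpr hp)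
    (fun s : ι →₀ ℕ => s.sum fun _ e => e)
  intro h0
  have hc : coeff d (homogeneousComponent p.totalDegree p) = coeff d p := by
    rw [coeff_homogeneousComponent, if_pos]
    rw [← sumid_eq_degree, ← hsup]; rfl
  rw [h0, coeff_zero] at hc
  exact mem_support_iff.mp hd hc.symm

set_option linter.unusedSectionVars false in
lemma totalDegree_add_le_of_mul {p q : MvPolynomial ι K} (hp : p ≠ 0) (hq : q ≠ 0) :
    p.totalDegree + q.totalDegree ≤ (p * q).totalDegree := by
  set dp := p.totalDegree with hdp
  set dq := q.totalDegree with hdq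
  set P := homogeneousComponent dp p with hP
  set Q := homogeneousComponent dq q with hQ
  have hPh : P.IsHomogeneous dp := homogeneousComponent_isHomogeneous dp p
  have hQh : Q.IsHomogeneous dq := homogeneousComponent_isHomogeneous dq q
  have hPQ : P * Q ≠ 0 := mul_ne_zero (top_ne_zero hp) (top_ne_zero hq)
  obtain ⟨d, hd⟩ := exists_coeff_ne_zero hPQ
  have hdd : d.degree = dp + dq := by
    rw [Finsupp.degree_eq_weight_one]
    exact (hPh.mul hQh) hd
  have hco : coeff d (p * q) = coeff d (P * Q) := by
    rw [coeff_mul, coeff_mul]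
    refine Finset.sum_congr rfl ?_
    rintro ⟨u, v⟩ huv
    rw [Finset.HasAntidiagonal.mem_antidiagonal] at huv
    have hsum : u.degree + v.degree = dp + dq := by rw [← degree_add', huv, hdd]
    rcases lt_trichotomy u.degree dp with hlt | heq | hgt
    · have hvq : dq < v.degree := by omega
      have h1 : coeff v q = 0 := by
        apply coeff_eq_zero_of_totalDegree_lt
        rw [show (∑ i ∈ v.support, v i) = v.degree from rfl]; omega
      have h2 : coeff v Q = 0 := by
        rw [hQ, coeff_homogeneousComponent, if_neg (by omega)]
      simp [h1, h2]
    · have hveq : v.degree = dq := by omega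
      rw [hP, hQ, coeff_homogeneousComponent, coeff_homogeneousComponent,
        if_pos heq, if_pos hveq]
    · have h1 : coeff u p = 0 := by
        apply coeff_eq_zero_of_totalDegree_lt
        rw [show (∑ i ∈ u.support, u i) = u.degree from rfl]; omega
      have h2 : coeff u P = 0 := by
        rw [hP, coeff_homogeneousComponent, if_neg (by omega)]
      simp [h1, h2]
  have hmem : d ∈ (p * q).support := mem_support_iff.mpr (by rw [hco]; exact hd)
  have := le_totalDegree hmem
  rw [sumid_eq_degree, hdd] at this
  exact this

set_option linter.unusedSectionVars false in
lemma totalDegree_mkDerivation_le (g : ι → MvPolynomial ι K)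
    (hg : ∀ i, (g i).totalDegree ≤ 1) (p : MvPolynomial ι K) :
    (mkDerivation K g p).totalDegree ≤ p.totalDegree := by
  conv_lhs => rw [p.as_sum]
  rw [map_sum]
  refine (totalDegree_finset_sum _ _).trans (Finset.sup_le fun d hd => ?_)
  rw [mkDerivation_monomial]
  refine (totalDegree_smul_le _ _).trans ?_
  rw [Finsupp.sum]
  refine (totalDegree_finset_sum _ _).trans (Finset.sup_le fun i hi => ?_)
  rw [smul_eq_mul]
  refine (totalDegree_mul _ _).trans ?_
  have h2 := totalDegree_monomial_le (d - Finsupp.single i 1) ((d i : K))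
  have hle : Finsupp.single i 1 ≤ d := by
    rw [Finsupp.single_le_iff]
    exact Nat.one_le_iff_ne_zero.mpr (Finsupp.mem_support_iff.mp hi)
  have hdec : (d - Finsupp.single i 1).sum (fun _ e => e) + 1 = d.sum fun _ e => e := by
    have hsub : (d - Finsupp.single i 1) + Finsupp.single i 1 = d :=
      tsub_add_cancel_of_le hle
    have := Finsupp.sum_add_index' (f := d - Finsupp.single i 1)
      (g := Finsupp.single i 1) (h := fun (_ : ι) (e : ℕ) => e)
      (fun _ => rfl) (fun _ _ _ => rfl)
    rw [hsub] at this
    rw [this, Finsupp.sum_single_index]; rfl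
  have hdtot := le_totalDegree hd
  have hgi := hg i
  have : (d - Finsupp.single i 1).sum (fun _ e => e) + 1 ≤ p.totalDegree := by omega
  refine le_trans (add_le_add (h2.trans ?_) hgi) this
  exact le_of_eq rfl

set_option linter.unusedSectionVars false in
lemma fmul_D_pow (D : Derivation K (MvPolynomial ι K) (MvPolynomial ι K))
    (f : MvPolynomial ι K) (k : ℕ) :
    f * D (f ^ k) = (k : MvPolynomial ι K) * (f ^ k * D f) := by
  cases k with
  | zero => simp
  | succ k =>
    rw [Derivation.leibniz_pow]
    simp only [smul_eq_mul, nsmul_eq_mul, Nat.add_sub_cancel]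
    push_cast
    ring

set_option linter.unusedSectionVars false in
lemma key_dvd (D : Derivation K (MvPolynomial ι K) (MvPolynomial ι K))
    {f g h : MvPolynomial ι K}
    (hf : Prime f) {n m : ℕ} (hmn : m < n) (hg : ¬ f ∣ g) (hh : ¬ f ∣ h)
    (heq : D (f ^ n * g) * (f ^ m * h) = (f ^ n * g) * D (f ^ m * h)) : f ∣ D f := by
  have hf0 : f ≠ 0 := hf.ne_zero
  have e1 : f * D (f ^ n * g) = f ^ (n + 1) * D g + (n : MvPolynomial ι K) * (f ^ n * D f) * g := by
    rw [Derivation.leibniz]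
    simp only [smul_eq_mul]
    have := fmul_D_pow D f n
    linear_combination g * this
  have e2 : f * D (f ^ m * h) = f ^ (m + 1) * D h + (m : MvPolynomial ι K) * (f ^ m * D f) * h := by
    rw [Derivation.leibniz]
    simp only [smul_eq_mul]
    have := fmul_D_pow D f m
    linear_combination h * this
  have E : (f ^ (n + 1) * D g + (n : MvPolynomial ι K) * (f ^ n * D f) * g) * (f ^ m * h)
      = (f ^ n * g) * (f ^ (m + 1) * D h + (m : MvPolynomial ι K) * (f ^ m * D f) * h) := by
    linear_combination (-(f ^ m * h)) * e1 + (f ^ n * g) * e2 + f * heq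
  have hc0 : ((n : K) - (m : K)) ≠ 0 := sub_ne_zero.mpr (by exact_mod_cast hmn.ne')
  have hcast : ((n : MvPolynomial ι K) - (m : MvPolynomial ι K)) = C ((n : K) - (m : K)) := by
    simp only [map_sub, map_natCast]
  have E3 : f ^ (n + m) * (C ((n : K) - (m : K)) * (D f * g * h))
      = f ^ (n + m) * (f * (g * D h - D g * h)) := by
    rw [← hcast]
    linear_combination E
  have E4 : C ((n : K) - (m : K)) * (D f * g * h) = f * (g * D h - D g * h) :=
    mul_left_cancel₀ (pow_ne_zero (n+m) hf0) E3
  have hdvd1 : f ∣ C ((n : K) - (m : K)) * (D f * g * h) := ⟨g * D h - D g * h, E4⟩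
  have hdvd2 : f ∣ D f * g * h := by
    have : D f * g * h = C ((n : K) - (m : K))⁻¹ * (C ((n : K) - (m : K)) * (D f * g * h)) := by
      rw [← mul_assoc, ← C_mul, inv_mul_cancel₀ hc0, C_1, one_mul]
    rw [this]
    exact hdvd1.mul_left _
  rcases hf.dvd_mul.mp hdvd2 with h1 | h1
  · rcases hf.dvd_mul.mp h1 with h2 | h2
    · exact h2
    · exact absurd h2 hg
  · exact absurd h1 hh

set_option linter.unusedSectionVars false in
lemma toPoly_add (b : Module.Basis ι K L) (x y : L) :
    toPoly b (x + y) = toPoly b x + toPoly b y := by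
  simp [toPoly, map_add, add_mul, Finset.sum_add_distrib]

set_option linter.unusedSectionVars false in
lemma toPoly_smul (b : Module.Basis ι K L) (t : K) (x : L) :
    toPoly b (t • x) = t • toPoly b x := by
  simp only [toPoly, map_smul, Finsupp.smul_apply, smul_eq_mul, Finset.smul_sum,
    smul_eq_C_mul, C_mul, mul_assoc]

set_option linter.unusedSectionVars false in
lemma toPoly_totalDegree_le (b : Module.Basis ι K L) (w : L) : (toPoly b w).totalDegree ≤ 1 := by
  refine (totalDegree_finset_sum _ _).trans (Finset.sup_le fun i _ => ?_)
  refine (totalDegree_mul _ _).trans ?_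
  simp [totalDegree_C, totalDegree_X]

set_option linter.unusedSectionVars false in
lemma mkDerivation_add' (g h : ι → MvPolynomial ι K) :
    (mkDerivation K (fun i => g i + h i) : Derivation K (MvPolynomial ι K) (MvPolynomial ι K))
      = mkDerivation K g + mkDerivation K h :=
  derivation_ext fun i => by simp

set_option linter.unusedSectionVars false in
lemma mkDerivation_smul' (t : K) (g : ι → MvPolynomial ι K) :
    (mkDerivation K (fun i => t • g i) : Derivation K (MvPolynomial ι K) (MvPolynomial ι K))
      = t • mkDerivation K g :=
  derivation_ext fun i => by simp

set_option linter.unusedSectionVars false in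
lemma adS_add (b : Module.Basis ι K L) (v w : L) (p : MvPolynomial ι K) :
    adS b (v + w) p = adS b v p + adS b w p := by
  unfold adS
  have h1 : (fun i => toPoly b ⁅v + w, b i⁆)
      = fun i => toPoly b ⁅v, b i⁆ + toPoly b ⁅w, b i⁆ :=
    funext fun i => by rw [add_lie, toPoly_add]
  rw [h1, mkDerivation_add']
  rfl

set_option linter.unusedSectionVars false in
lemma adS_smul (b : Module.Basis ι K L) (t : K) (v : L) (p : MvPolynomial ι K) :
    adS b (t • v) p = t • adS b v p := by
  unfold adS
  have h1 : (fun i => toPoly b ⁅t • v, b i⁆)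
      = fun i => t • toPoly b ⁅v, b i⁆ :=
    funext fun i => by rw [smul_lie, toPoly_smul]
  rw [h1, mkDerivation_smul']
  rfl

lemma prod_zpow_extract {A : Type} [CommRing A] [IsDomain A] (a c : A) (hc : c ≠ 0)
    {k : ℕ} (f : Fin k → A) (hf0 : ∀ i, f i ≠ 0) (m : Fin k → ℤ)
    (hfac : (algebraMap A (FractionRing A) a) / (algebraMap A (FractionRing A) c) =
      ∏ i, (algebraMap A (FractionRing A) (f i)) ^ (m i)) :
    a * (∏ i, f i ^ ((-(m i)).toNat)) = c * (∏ i, f i ^ ((m i).toNat)) := by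
  set φ := algebraMap A (FractionRing A) with hφ
  have hinj : Function.Injective φ := IsFractionRing.injective A (FractionRing A)
  have hφne : ∀ x : A, x ≠ 0 → φ x ≠ 0 := fun x hx => by
    rwa [ne_eq, hφ, IsFractionRing.to_map_eq_zero_iff]
  have hzpow : ∀ i, φ (f i) ^ (m i) * φ (f i) ^ ((-(m i)).toNat) = φ (f i) ^ ((m i).toNat) := by
    intro i
    have hfi : φ (f i) ≠ 0 := hφne _ (hf0 i)
    rcases le_or_gt 0 (m i) with hsgn | hsgn
    · obtain ⟨t, ht⟩ : ∃ t : ℕ, m i = (t : ℤ) := ⟨(m i).toNat, by omega⟩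
      rw [ht, show (-(t : ℤ)).toNat = 0 by omega, pow_zero, mul_one, zpow_natCast,
        Int.toNat_natCast]
    · obtain ⟨t, ht⟩ : ∃ t : ℕ, m i = -(t : ℤ) := ⟨(-(m i)).toNat, by omega⟩
      rw [ht, show (-(t : ℤ)).toNat = 0 by omega, pow_zero,
        show (-(-(t : ℤ))).toNat = t by omega, zpow_neg, zpow_natCast]
      exact inv_mul_cancel₀ (pow_ne_zero _ hfi)
  apply hinj
  rw [map_mul, map_mul, map_prod, map_prod]
  simp only [map_pow]
  have h1 : (∏ i, φ (f i) ^ (m i)) * (∏ i, φ (f i) ^ ((-(m i)).toNat))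
      = ∏ i, φ (f i) ^ ((m i).toNat) := by
    rw [← Finset.prod_mul_distrib]
    exact Finset.prod_congr rfl fun i _ => hzpow i
  have hcne : φ c ≠ 0 := hφne c hc
  calc φ a * ∏ i, φ (f i) ^ ((-(m i)).toNat)
      = φ c * ((φ a / φ c) * ∏ i, φ (f i) ^ ((-(m i)).toNat)) := by
        field_simp
    _ = φ c * ((∏ i, φ (f i) ^ (m i)) * ∏ i, φ (f i) ^ ((-(m i)).toNat)) := by rw [hfac]
    _ = φ c * ∏ i, φ (f i) ^ ((m i).toNat) := by rw [h1]

/-- Let `p = a/c` be a nonzero invariant element of the fraction field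
of `S(𝔤)` (invariance: `⁅v,a⁆·c = a·⁅v,c⁆` for all `v`, i.e. the extended derivation
kills `a/c`).  If `a/c = ∏ fᵢ^{mᵢ}` in the fraction field with the `fᵢ` pairwise
non-associate primes of `S(𝔤)` and the `mᵢ` nonzero integers, then each `fᵢ` is a
semi-invariant: there is a linear form `λᵢ` on `𝔤` with `⁅v, fᵢ⁆ = λᵢ(v)·fᵢ`. -/
theorem statement6 (b : Module.Basis ι K L) (a c : MvPolynomial ι K)
    (ha : a ≠ 0) (hc : c ≠ 0)
    (hinv : ∀ v : L, adS b v a * c = a * adS b v c)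
    {k : ℕ} (f : Fin k → MvPolynomial ι K)
    (hprime : ∀ i, Prime (f i))
    (hnotassoc : ∀ i j, i ≠ j → ¬ Associated (f i) (f j))
    (m : Fin k → ℤ) (hm : ∀ i, m i ≠ 0)
    (hfac : (algebraMap (MvPolynomial ι K) (FractionRing (MvPolynomial ι K)) a) /
        (algebraMap (MvPolynomial ι K) (FractionRing (MvPolynomial ι K)) c) =
      ∏ i, (algebraMap (MvPolynomial ι K) (FractionRing (MvPolynomial ι K)) (f i)) ^ (m i)) :
    ∀ i, ∃ lam : Module.Dual K L, ∀ v : L,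
      adS b v (f i) = MvPolynomial.C (lam v) * f i := by
  intro i₀
  have hf0 : f i₀ ≠ 0 := (hprime i₀).ne_zero
  have haN : a * (∏ j, f j ^ ((-(m j)).toNat)) = c * (∏ j, f j ^ ((m j).toNat)) :=
    prod_zpow_extract a c hc f (fun j => (hprime j).ne_zero) m hfac
  have hnd : ∀ j, j ≠ i₀ → ∀ e : ℕ, ¬ f i₀ ∣ f j ^ e := by
    intro j hj e hdvd
    exact hnotassoc i₀ j (fun h => hj h.symm)
      ((hprime i₀).associated_of_dvd (hprime j) ((hprime i₀).dvd_of_dvd_pow hdvd))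
  have hne1 : ¬ f i₀ ∣ (1 : MvPolynomial ι K) :=
    fun hdd => (hprime i₀).not_unit (isUnit_of_dvd_one hdd)
  have hcases : (f i₀ ∣ (∏ j, f j ^ ((m j).toNat)) ∧ ¬ f i₀ ∣ (∏ j, f j ^ ((-(m j)).toNat)))
      ∨ (f i₀ ∣ (∏ j, f j ^ ((-(m j)).toNat)) ∧ ¬ f i₀ ∣ (∏ j, f j ^ ((m j).toNat))) := by
    rcases (hm i₀).lt_or_gt with hsgn | hsgn
    · right
      constructor
      · exact dvd_trans (dvd_pow_self _ (by omega : ((-(m i₀)).toNat) ≠ 0))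
          (Finset.dvd_prod_of_mem _ (Finset.mem_univ i₀))
      · intro hdd
        obtain ⟨j, _, hj⟩ := ((hprime i₀).dvd_finset_prod_iff _).mp hdd
        by_cases hji : j = i₀
        · subst hji; rw [show (m j).toNat = 0 by omega, pow_zero] at hj; exact hne1 hj
        · exact hnd j hji _ hj
    · left
      constructor
      · exact dvd_trans (dvd_pow_self _ (by omega : ((m i₀).toNat) ≠ 0))
          (Finset.dvd_prod_of_mem _ (Finset.mem_univ i₀))
      · intro hdd
        obtain ⟨j, _, hj⟩ := ((hprime i₀).dvd_finset_prod_iff _).mp hdd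
        by_cases hji : j = i₀
        · subst hji; rw [show (-(m j)).toNat = 0 by omega, pow_zero] at hj; exact hne1 hj
        · exact hnd j hji _ hj
  obtain ⟨n, g, hg, hag⟩ := WfDvdMonoid.max_power_factor ha (hprime i₀).irreducible
  obtain ⟨mm, h, hh, hch⟩ := WfDvdMonoid.max_power_factor hc (hprime i₀).irreducible
  have hnm : n ≠ mm := by
    rintro rfl
    rw [hag, hch] at haN
    have hGN : g * (∏ j, f j ^ ((-(m j)).toNat)) = h * (∏ j, f j ^ ((m j).toNat)) :=
      mul_left_cancel₀ (pow_ne_zero n hf0) (by linear_combination haN)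
    rcases hcases with ⟨hPd, hNd⟩ | ⟨hNd, hPd⟩
    · have : f i₀ ∣ g * (∏ j, f j ^ ((-(m j)).toNat)) := hGN ▸ hPd.mul_left h
      rcases (hprime i₀).dvd_mul.mp this with h1 | h1
      exacts [hg h1, hNd h1]
    · have : f i₀ ∣ h * (∏ j, f j ^ ((m j).toNat)) := hGN ▸ hNd.mul_left g
      rcases (hprime i₀).dvd_mul.mp this with h1 | h1
      exacts [hh h1, hPd h1]
  have hdvdDf : ∀ v : L, f i₀ ∣ adS b v (f i₀) := by
    intro v
    have hD : ∀ p : MvPolynomial ι K,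
        adS b v p = (mkDerivation K (fun i => toPoly b ⁅v, b i⁆)) p := fun p => rfl
    have heq : (mkDerivation K (fun i => toPoly b ⁅v, b i⁆)) (f i₀ ^ n * g) * (f i₀ ^ mm * h)
        = (f i₀ ^ n * g) * (mkDerivation K (fun i => toPoly b ⁅v, b i⁆)) (f i₀ ^ mm * h) := by
      rw [← hag, ← hch, ← hD, ← hD]; exact hinv v
    rw [hD]
    rcases hnm.lt_or_gt with hlt | hlt
    · exact key_dvd _ (hprime i₀) hlt hh hg (by linear_combination -heq)
    · exact key_dvd _ (hprime i₀) hlt hg hh heq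
  have hdeg : ∀ v : L, (adS b v (f i₀)).totalDegree ≤ (f i₀).totalDegree := fun v =>
    totalDegree_mkDerivation_le _ (fun i => toPoly_totalDegree_le b _) _
  have hex : ∀ v : L, ∃ cc : K, adS b v (f i₀) = C cc * f i₀ := by
    intro v
    obtain ⟨q, hq⟩ := hdvdDf v
    by_cases hq0 : q = 0
    · exact ⟨0, by simp [hq, hq0]⟩
    · have hdq : q.totalDegree = 0 := by
        have h1 := totalDegree_add_le_of_mul hf0 hq0
        have h2 : (f i₀ * q).totalDegree ≤ (f i₀).totalDegree := hq ▸ hdeg v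
        omega
      refine ⟨coeff 0 q, ?_⟩
      rw [hq]
      conv_lhs => rw [eq_C_of_totalDegree_eq_zero hdq]
      ring
  obtain ⟨d₀, hd₀⟩ := exists_coeff_ne_zero hf0
  refine ⟨{ toFun := fun v => coeff d₀ (adS b v (f i₀)) * (coeff d₀ (f i₀))⁻¹,
            map_add' := ?_, map_smul' := ?_ }, ?_⟩
  · intro v w
    rw [adS_add, coeff_add]; ring
  · intro t v
    rw [adS_smul, coeff_smul]
    simp only [smul_eq_mul, RingHom.id_apply]
    ring
  · intro v
    obtain ⟨cc, hcc⟩ := hex v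
    have hlv : coeff d₀ (adS b v (f i₀)) * (coeff d₀ (f i₀))⁻¹ = cc := by
      rw [hcc, coeff_C_mul, mul_assoc, mul_inv_cancel₀ hd₀, mul_one]
    simp only [LinearMap.coe_mk, AddHom.coe_mk]
    rw [hlv, hcc]
end
end

section
/- Let 𝔤 be a simple Lie algebra over an algebraically closed field of characteristic 0 with sl₂-triple (e,h,f), let 𝔩 = 𝔤(e) ∩ 𝔤(f), and let 𝔱 be a subspace of a Cartan subalgebra of 𝔩 with centralizer 𝔞 = 𝔤^𝔱 in 𝔤. For x ∈ 𝔞(f) := 𝔞 ∩ 𝔤(f) and any v ∈ 𝔤(e), t ∈ 𝔱, the coadjoint action of [t,v] on x (viewing 𝔤(f) as 𝔤(e)* via the Killing form) lies in [𝔱, 𝔤(f)]; that is, the image of [𝔱,𝔤(e)] under the map v ↦ v.x is contained in [𝔱,𝔤(f)]. -/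
noncomputable section

variable {K : Type} [Field K] [IsAlgClosed K] [CharZero K]
variable {L : Type} [LieRing L] [LieAlgebra K L] [Module.Finite K L]

/-- The centralizer `𝔤(e)` of an element, as a submodule. -/
def cent (K : Type) {L : Type} [Field K] [LieRing L] [LieAlgebra K L] (e : L) :
    Submodule K L where
  carrier := {v : L | ⁅v, e⁆ = 0}
  add_mem' := by
    intro a b ha hb
    rw [Set.mem_setOf_eq] at *
    rw [add_lie, ha, hb, add_zero]
  zero_mem' := by simp
  smul_mem' := by
    intro c a ha
    rw [Set.mem_setOf_eq] at *
    rw [smul_lie, ha, smul_zero]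

/-- The centralizer `𝔤(e)` of an element, as a Lie subalgebra. -/
def centLie (K : Type) {L : Type} [Field K] [LieRing L] [LieAlgebra K L] (e : L) :
    LieSubalgebra K L :=
  { cent K e with
    lie_mem' := by
      intro x y hx hy
      change ⁅x, e⁆ = 0 at hx
      change ⁅y, e⁆ = 0 at hy
      change ⁅⁅x, y⁆, e⁆ = 0
      rw [lie_lie, hx, hy, lie_zero, lie_zero, sub_zero] }

/-- The weight space (in `L`) of weight `lam` for the adjoint action of the subspace `T`. -/
def wtSpace (T : Submodule K L) (lam : Module.Dual K L) : Submodule K L where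
  carrier := {v : L | ∀ t ∈ T, ⁅t, v⁆ = lam t • v}
  add_mem' := by
    intro a b ha hb t ht
    rw [Set.mem_setOf_eq] at ha hb
    rw [lie_add, ha t ht, hb t ht, smul_add]
  zero_mem' := by intro t ht; rw [lie_zero, smul_zero]
  smul_mem' := by
    intro c a ha t ht
    rw [Set.mem_setOf_eq] at ha
    rw [lie_smul, ha t ht, smul_comm]

/-- The centralizer `𝔞` of the subspace `T` in `L`, as a submodule. -/
def centT (T : Submodule K L) : Submodule K L := wtSpace T 0

/-- Weight space of the `T`-action on the centralizer `𝔤(e)`:  `E_λ` (resp. `F_λ` taking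
`f` in place of `e`). -/
def EwtE (T : Submodule K L) (e : L) (lam : Module.Dual K L) : Submodule K L :=
  wtSpace T lam ⊓ cent K e

/-- The stabilizer `𝔤(e)(x)` of `x ∈ 𝔤(f) ≅ 𝔤(e)*` for the coadjoint action of `𝔤(e)`:
the set of `v ∈ 𝔤(e)` with `κ(x, ⁅v, w⁆) = 0` for all `w ∈ 𝔤(e)`. -/
def coadStabE (e : L) (x : L) : Submodule K L where
  carrier := {v : L | v ∈ cent K e ∧ ∀ w ∈ cent K e, killingForm K L x ⁅v, w⁆ = 0}
  add_mem' := by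
    intro a b ha hb
    refine ⟨Submodule.add_mem _ ha.1 hb.1, fun w hw => ?_⟩
    rw [add_lie, map_add, ha.2 w hw, hb.2 w hw, add_zero]
  zero_mem' := ⟨Submodule.zero_mem _, fun w hw => by rw [zero_lie, map_zero]⟩
  smul_mem' := by
    intro c a ha
    refine ⟨Submodule.smul_mem _ c ha.1, fun w hw => ?_⟩
    rw [smul_lie, map_smul, ha.2 w hw, smul_eq_mul, mul_zero]

set_option linter.unusedSectionVars false
set_option maxHeartbeats 1000000

open Module LieAlgebra

/-- Shift lemma: if `⁅h,a⁆ = c • a` then `⁅a, ·⁆` maps the generalized `μ`-eigenspace of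
`ad h` into the generalized `μ+c`-eigenspace. -/
lemma shift_mem_maxGen {h a : L} {c : K} (hc : ⁅h, a⁆ = c • a) (μ : K) {x : L}
    (hx : x ∈ (ad K L h).maxGenEigenspace μ) :
    ⁅a, x⁆ ∈ (ad K L h).maxGenEigenspace (μ + c) := by
  obtain ⟨k, hk⟩ := (Module.End.mem_maxGenEigenspace _ _ _).mp hx
  rw [Module.End.mem_maxGenEigenspace]
  refine ⟨k, ?_⟩
  have step : ∀ (y : L),
      (ad K L h - (μ + c) • 1) ⁅a, y⁆ = ⁅a, (ad K L h - μ • 1) y⁆ := by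
    intro y
    simp only [LinearMap.sub_apply, LinearMap.smul_apply, Module.End.one_apply, ad_apply]
    rw [leibniz_lie h a y, hc, lie_sub, lie_smul, smul_lie]
    module
  have key : ∀ (j : ℕ) (y : L),
      ((ad K L h - (μ + c) • 1) ^ j) ⁅a, y⁆ = ⁅a, ((ad K L h - μ • 1) ^ j) y⁆ := by
    intro j
    induction j with
    | zero => simp
    | succ j ih =>
      intro y
      rw [pow_succ', pow_succ', Module.End.mul_apply, Module.End.mul_apply, ih, step]
  rw [key, hk, lie_zero]


/-- A true eigenvector lying in a generalized eigenspace forces equality of eigenvalues. -/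
lemma eig_val_of_mem_maxGen {g : Module.End K L} {μ c : K} {x : L}
    (hx : x ∈ g.maxGenEigenspace μ) (hgx : g x = c • x) (hx0 : x ≠ 0) : c = μ := by
  obtain ⟨k, hk⟩ := (Module.End.mem_maxGenEigenspace _ _ _).mp hx
  have key : ∀ j : ℕ, ((g - μ • 1) ^ j) x = (c - μ) ^ j • x := by
    intro j
    induction j with
    | zero => simp
    | succ j ih =>
      rw [pow_succ', Module.End.mul_apply, ih, map_smul, LinearMap.sub_apply,
        LinearMap.smul_apply, Module.End.one_apply, hgx, ← sub_smul, smul_smul, pow_succ,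
        mul_comm]
  rw [key] at hk
  by_contra hne
  have hpow : (c - μ) ^ k ≠ 0 := pow_ne_zero _ (sub_ne_zero.mpr hne)
  exact hx0 (by simpa [smul_eq_zero, hpow] using hk)

/-- Refine a preimage under `⁅f, ·⁆` of an element of a generalized eigenspace so that it lies
in the shifted generalized eigenspace. -/
lemma exists_preimage_mem_maxGen {h f : L} (hhf : ⁅h, f⁆ = (-2 : K) • f) {w : L} {μ : K}
    (hw : w ∈ (ad K L h).maxGenEigenspace μ) {z' : L} (hz' : ⁅f, z'⁆ = w) :
    ∃ z ∈ (ad K L h).maxGenEigenspace (μ + 2), ⁅f, z⁆ = w := by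
  classical
  set Hd := ad K L h
  set V := Hd.maxGenEigenspace μ with hV
  set W := ⨆ ν ∈ {ν : K | ν ≠ μ}, Hd.maxGenEigenspace ν with hW
  have hdisj : Disjoint V W := (Module.End.independent_maxGenEigenspace Hd) μ
  have hsup : V ⊔ W = ⊤ := by
    rw [eq_top_iff, ← Module.End.iSup_maxGenEigenspace_eq_top Hd]
    refine iSup_le fun ν => ?_
    by_cases hν : ν = μ
    · subst hν; exact le_sup_left
    · exact le_trans (le_iSup₂ (f := fun ν _ => Hd.maxGenEigenspace ν) ν hν) le_sup_right
  have hcompl : IsCompl V W := ⟨hdisj, codisjoint_iff.mpr hsup⟩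
  set π := V.linearProjOfIsCompl W hcompl with hπ
  obtain ⟨g, hg, hgsum⟩ := (Submodule.mem_iSup_iff_exists_finsupp _ z').mp
    (by rw [Module.End.iSup_maxGenEigenspace_eq_top Hd]; trivial)
  have hterm : ∀ ν : K, ⁅f, g ν⁆ ∈ Hd.maxGenEigenspace (ν + (-2)) := fun ν =>
    shift_mem_maxGen hhf ν (hg ν)
  have htop : ⁅f, g (μ + 2)⁆ ∈ V := by
    have := hterm (μ + 2)
    rwa [show μ + 2 + (-2) = μ by ring] at this
  have hsum : w = ∑ ν ∈ g.support, ⁅f, g ν⁆ := by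
    rw [← hz', ← hgsum, Finsupp.sum]
    simp only [← LieAlgebra.ad_apply (R := K) (L := L)]
    rw [map_sum]
  have hπw : π w = ⟨w, hw⟩ := Submodule.linearProjOfIsCompl_apply_left hcompl ⟨w, hw⟩
  have hπw' : π w = ⟨⁅f, g (μ + 2)⁆, htop⟩ := by
    rw [hsum, map_sum]
    rw [Finset.sum_eq_single (μ + 2)]
    · exact Submodule.linearProjOfIsCompl_apply_left hcompl ⟨_, htop⟩
    · intro ν _ hν
      have hne' : ν + (-2) ≠ μ := fun hc => hν (by linear_combination hc)
      have hmem : ⁅f, g ν⁆ ∈ W :=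
        (le_iSup₂ (f := fun ν _ => Hd.maxGenEigenspace ν) (ν + (-2)) hne') (hterm ν)
      exact Submodule.linearProjOfIsCompl_apply_right hcompl ⟨_, hmem⟩
    · intro hne
      rw [Finsupp.notMem_support_iff.mp hne]
      simp
  exact ⟨g (μ + 2), hg (μ + 2), (Subtype.mk_eq_mk.mp (hπw.symm.trans hπw')).symm⟩

/-- **Core sl₂ fact**: a primitive vector lying in the image of `⁅f, ·⁆` must vanish. -/
lemma eq_zero_of_prim_of_mem_range {h e f : L} (t : IsSl2Triple h e f)
    {w : L} {μ : K} (hh : ⁅h, w⁆ = μ • w) (he : ⁅e, w⁆ = 0)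
    {z' : L} (hz' : ⁅f, z'⁆ = w) : w = 0 := by
  classical
  by_contra hw0
  have P : t.HasPrimitiveVectorWith w μ := ⟨hw0, hh, he⟩
  obtain ⟨n, hn⟩ := P.exists_nat
  have hhe : ⁅h, e⁆ = (2 : K) • e := t.lie_h_e_smul K
  have hhf : ⁅h, f⁆ = (-2 : K) • f := by rw [t.lie_lie_smul_f K, ← neg_smul]
  have hwmax : w ∈ (ad K L h).maxGenEigenspace μ := by
    rw [Module.End.mem_maxGenEigenspace]
    exact ⟨1, by simp [LieAlgebra.ad_apply, hh]⟩
  obtain ⟨z, hzmem, hz⟩ := exists_preimage_mem_maxGen hhf hwmax hz'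
  have hz0 : z ≠ 0 := by rintro rfl; rw [lie_zero] at hz; exact hw0 hz.symm
  set Z : ℕ → L := fun k => ((ad K L e) ^ k) z with hZ
  have hZ0 : Z 0 = z := by simp [hZ]
  have hZsucc : ∀ k, Z (k + 1) = ⁅e, Z k⁆ := by
    intro k
    simp [hZ, pow_succ', Module.End.mul_apply, LieAlgebra.ad_apply]
  have hZmem : ∀ k : ℕ, Z k ∈ (ad K L h).maxGenEigenspace (μ + 2 + 2 * (k : K)) := by
    intro k
    induction k with
    | zero => simpa [hZ0] using hzmem
    | succ k ih =>
      have := shift_mem_maxGen hhe _ ih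
      rw [← hZsucc k] at this
      rwa [show μ + 2 + 2 * (k : K) + 2 = μ + 2 + 2 * (((k + 1 : ℕ)) : K) by push_cast; ring] at this
  have hA : ∀ k : ℕ, ((k : K) + 1) • ⁅h, Z k⁆
      = ((k : K) * ((k : K) + 1)) • Z k - ⁅f, Z (k + 1)⁆ := by
    intro k
    induction k with
    | zero =>
      have h0 : (0 : L) = ⁅h, z⁆ + ⁅f, Z 1⁆ := by
        rw [hZsucc 0, hZ0, ← t.lie_e_f, ← leibniz_lie, hz, he]
      simp only [Nat.cast_zero, zero_add, one_smul, zero_mul, zero_smul, zero_sub, hZ0]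
      linear_combination (norm := module) -h0
    | succ k ih =>
      have e_ih := congrArg (fun u => ⁅e, u⁆) ih
      simp only [lie_smul, lie_sub] at e_ih
      rw [leibniz_lie e h (Z k), leibniz_lie e f (Z (k + 1)),
        show ⁅e, h⁆ = -((2 : K) • e) from by rw [← lie_skew, hhe],
        t.lie_e_f, ← hZsucc k, ← hZsucc (k + 1), neg_lie, smul_lie,
        ← hZsucc k] at e_ih
      push_cast
      push_cast at e_ih
      linear_combination (norm := module) e_ih
  have hfin : Fintype {ν : K // (ad K L h).maxGenEigenspace ν ≠ ⊥} :=
    (Module.End.independent_maxGenEigenspace _).fintypeNeBotOfFiniteDimensional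
  have hex : ∃ k, Z k = 0 := by
    by_contra hall
    push_neg at hall
    set φ : ℕ → {ν : K // (ad K L h).maxGenEigenspace ν ≠ ⊥} := fun k =>
      ⟨μ + 2 + 2 * (k : K), Submodule.ne_bot_iff _ |>.mpr ⟨Z k, hZmem k, hall k⟩⟩ with hφ
    obtain ⟨k₁, k₂, hne, heq⟩ := Finite.exists_ne_map_eq_of_infinite φ
    apply hne
    have : μ + 2 + 2 * (k₁ : K) = μ + 2 + 2 * (k₂ : K) := congrArg Subtype.val heq
    have h2 : (k₁ : K) = (k₂ : K) := by
      have := add_left_cancel this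
      exact mul_left_cancel₀ two_ne_zero this
    exact_mod_cast h2
  set k₀ := Nat.find hex with hk₀
  have hk₀pos : k₀ ≠ 0 := by
    intro hc
    have := Nat.find_spec hex
    rw [← hk₀, hc, hZ0] at this
    exact hz0 this
  obtain ⟨N, hN⟩ : ∃ N, k₀ = N + 1 := ⟨k₀ - 1, (Nat.succ_pred_eq_of_pos (Nat.pos_of_ne_zero hk₀pos)).symm⟩
  have hZN : Z N ≠ 0 := Nat.find_min hex (by omega)
  have hZN1 : Z (N + 1) = 0 := by rw [← hN]; exact Nat.find_spec hex
  have hhZN : ⁅h, Z N⁆ = (N : K) • Z N := by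
    have := hA N
    rw [hZN1, lie_zero, sub_zero] at this
    have h1 : ((N : K) + 1) ≠ 0 := Nat.cast_add_one_ne_zero N
    apply smul_right_injective L h1
    show ((N : K) + 1) • ⁅h, Z N⁆ = ((N : K) + 1) • ((N : K) • Z N)
    rw [this, smul_smul, mul_comm]
  have hval : (N : K) = μ + 2 + 2 * (N : K) :=
    eig_val_of_mem_maxGen (hZmem N) (by rw [LieAlgebra.ad_apply, hhZN]) hZN
  have : ((n + N + 2 : ℕ) : K) = 0 := by
    push_cast
    rw [hn] at hval
    linear_combination -hval
  have := Nat.cast_eq_zero (R := K) |>.mp this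
  omega

lemma ker_inf_range_eq_bot {h e f : L} (t : IsSl2Triple h e f) :
    LinearMap.ker (ad K L e) ⊓ LinearMap.range (ad K L f) = ⊥ := by
  by_contra hne
  set W := LinearMap.ker (ad K L e) ⊓ LinearMap.range (ad K L f) with hW
  have hhe : ⁅h, e⁆ = (2 : K) • e := t.lie_h_e_smul K
  have hhf : ⁅h, f⁆ = (-2 : K) • f := by rw [t.lie_lie_smul_f K, ← neg_smul]
  have hmaps : Set.MapsTo (ad K L h) W W := by
    rintro x ⟨hk, hr⟩
    rw [SetLike.mem_coe, LinearMap.mem_ker, LieAlgebra.ad_apply] at hk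
    obtain ⟨z, hz⟩ := hr
    rw [LieAlgebra.ad_apply] at hz
    constructor
    · rw [SetLike.mem_coe, LinearMap.mem_ker, LieAlgebra.ad_apply, LieAlgebra.ad_apply]
      rw [leibniz_lie e h x, hk, lie_zero, add_zero, ← lie_skew e h, hhe, neg_lie,
        smul_lie, hk, smul_zero, neg_zero]
    · refine ⟨(-2 : K) • z + ⁅h, z⁆, ?_⟩
      rw [LieAlgebra.ad_apply, LieAlgebra.ad_apply, ← hz, leibniz_lie h f z, hhf,
        lie_add, lie_smul, smul_lie]
  haveI : Nontrivial ↥W := Submodule.nontrivial_iff_ne_bot.mpr hne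
  obtain ⟨μ, hμ⟩ := Module.End.exists_eigenvalue ((ad K L h).restrict hmaps)
  obtain ⟨v, hv⟩ := hμ.exists_hasEigenvector
  have hv0 : (v : L) ≠ 0 := fun hc => hv.right (Subtype.ext hc)
  have hhv : ⁅h, (v : L)⁆ = μ • (v : L) := by
    have := hv.apply_eq_smul
    have := congrArg (Subtype.val) this
    exact this
  have hev : ⁅e, (v : L)⁆ = 0 := by
    have h' := (Submodule.mem_inf.mp v.2).1
    rwa [LinearMap.mem_ker, LieAlgebra.ad_apply] at h'
  obtain ⟨z, hz⟩ := (Submodule.mem_inf.mp v.2).2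
  rw [LieAlgebra.ad_apply] at hz
  exact hv0 (eq_zero_of_prim_of_mem_range t hhv hev hz)

lemma kerF_sup_rangeE_eq_top {h e f : L} (t : IsSl2Triple h e f) :
    LinearMap.ker (ad K L f) ⊔ LinearMap.range (ad K L e) = ⊤ := by
  have h1 := ker_inf_range_eq_bot (K := K) t
  have h2 := ker_inf_range_eq_bot (K := K) t.symm
  have d1 := LinearMap.finrank_range_add_finrank_ker (ad K L e)
  have d2 := LinearMap.finrank_range_add_finrank_ker (ad K L f)
  have q1 := Submodule.finrank_sup_add_finrank_inf_eq
    (LinearMap.ker (ad K L e)) (LinearMap.range (ad K L f))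
  have q2 := Submodule.finrank_sup_add_finrank_inf_eq
    (LinearMap.ker (ad K L f)) (LinearMap.range (ad K L e))
  rw [h1, finrank_bot, add_zero] at q1
  rw [h2, finrank_bot, add_zero] at q2
  have s1 : finrank K ↥(LinearMap.ker (ad K L e) ⊔ LinearMap.range (ad K L f)) ≤ finrank K L :=
    Submodule.finrank_le _
  have s2 : finrank K ↥(LinearMap.ker (ad K L f) ⊔ LinearMap.range (ad K L e)) ≤ finrank K L :=
    Submodule.finrank_le _
  apply Submodule.eq_top_of_finrank_eq
  omega

include K in
lemma exists_decomp {h e f : L} (t : IsSl2Triple h e f) (m : L) :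
    ∃ u z : L, ⁅f, u⁆ = 0 ∧ m = u + ⁅e, z⁆ := by
  have htop := kerF_sup_rangeE_eq_top (K := K) t
  have hm : m ∈ (⊤ : Submodule K L) := trivial
  rw [← htop] at hm
  obtain ⟨u, hu, v, hv, huv⟩ := Submodule.mem_sup.mp hm
  obtain ⟨z, rfl⟩ := hv
  rw [LinearMap.mem_ker, LieAlgebra.ad_apply] at hu
  exact ⟨u, z, hu, by rw [← huv, LieAlgebra.ad_apply]⟩

/-- `𝔤` simple, `(e,h,f)` an `sl₂`-triple, `𝔱` a subspace of a Cartan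
subalgebra of `𝔩 = 𝔤(e) ∩ 𝔤(f)`.  For `x ∈ 𝔞(f)` (`𝔞` the centralizer of `𝔱`), `t ∈ 𝔱`
and `v ∈ 𝔤(e)`, the coadjoint action of `⁅t,v⁆` on `x` lies in `[𝔱, 𝔤(f)]`: the linear
form `w ↦ κ(w, ⁅⁅t,v⁆, x⁆)` on `𝔤(e)` is represented by an element of `[𝔱, 𝔤(f)]`. -/
theorem statement10 [LieAlgebra.IsSimple K L] {h e f : L} (ht : IsSl2Triple h e f)
    (T : Submodule K L)
    (H : LieSubalgebra K ↥(centLie K e ⊓ centLie K f)) [H.IsCartanSubalgebra]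
    (hT : T ≤ Submodule.map ((centLie K e ⊓ centLie K f).incl.toLinearMap) H.toSubmodule)
    (x : L) (hx : x ∈ cent K f) (hxT : ∀ t ∈ T, ⁅t, x⁆ = 0) :
    ∀ t ∈ T, ∀ v ∈ cent K e,
      ∃ y ∈ Submodule.span K {z : L | ∃ t' ∈ T, ∃ u ∈ cent K f, ⁅t', u⁆ = z},
        ∀ w ∈ cent K e, killingForm K L w ⁅⁅t, v⁆, x⁆ = killingForm K L w y := by
  intro t htT v hv
  obtain ⟨b, hbH, hb⟩ := hT htT
  have hbe : ⁅t, e⁆ = 0 := by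
    have h1 : (b : L) ∈ centLie K e := ((LieSubalgebra.mem_inf _ _ _).mp b.2).1
    rw [← hb]; exact h1
  obtain ⟨u, z, hu, hdec⟩ := exists_decomp (K := K) ht ⁅v, x⁆
  have hucent : u ∈ cent K f := by
    show ⁅u, f⁆ = 0
    rw [← lie_skew, hu, neg_zero]
  refine ⟨⁅t, u⁆, Submodule.subset_span ⟨t, htT, u, hucent, rfl⟩, ?_⟩
  intro w hw
  have hw' : ⁅w, e⁆ = 0 := hw
  have htx : ⁅t, x⁆ = 0 := hxT t htT
  have key : ⁅⁅t, v⁆, x⁆ = ⁅t, u⁆ + ⁅e, ⁅t, z⁆⁆ := by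
    rw [lie_lie, htx, lie_zero, sub_zero, hdec, lie_add, leibniz_lie t e z, hbe,
      zero_lie, zero_add]
  rw [key, map_add]
  have hzero : killingForm K L w ⁅e, ⁅t, z⁆⁆ = 0 := by
    rw [← LieModule.traceForm_apply_lie_apply, hw', map_zero, LinearMap.zero_apply]
  rw [hzero, add_zero]
end
end

section
/- With the setup of a simple Lie algebra 𝔤, sl₂-triple (e,h,f), torus 𝔱 ⊆ Cartan of 𝔩 = 𝔤(e)∩𝔤(f), and 𝔞 the centralizer of 𝔱: if x ∈ 𝔞(f) is such that the linear map v ↦ v.x from [𝔱,𝔤(e)] to 𝔤(f) is injective, then the coadjoint stabilizer 𝔤(e)(x) equals 𝔞(e)(x), the stabilizer of x in 𝔞(e). -/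
noncomputable section

variable {K : Type} [Field K] [IsAlgClosed K] [CharZero K]
variable {L : Type} [LieRing L] [LieAlgebra K L] [Module.Finite K L]

/-- Setup: `𝔤` simple, `sl₂`-triple `(e,h,f)`, `𝔱` a subspace of a
Cartan subalgebra of `𝔩 = 𝔤(e) ∩ 𝔤(f)`, `𝔞` the centralizer of `𝔱` (so that
`𝔤(e) = 𝔞(e) ⊕ [𝔱,𝔤(e)]`, recorded as the hypothesis `hdec`).  If `x ∈ 𝔞(f)` is such
that `v ↦ v.x` is injective on `[𝔱,𝔤(e)]`, then `𝔤(e)(x) = 𝔞(e)(x)`. -/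
theorem statement11 [LieAlgebra.IsSimple K L] {h e f : L} (ht : IsSl2Triple h e f)
    (T : Submodule K L)
    (H : LieSubalgebra K ↥(centLie K e ⊓ centLie K f)) [H.IsCartanSubalgebra]
    (hT : T ≤ Submodule.map ((centLie K e ⊓ centLie K f).incl.toLinearMap) H.toSubmodule)
    (hdec : cent K e ≤ (centT T ⊓ cent K e) ⊔
      Submodule.span K {z : L | ∃ t ∈ T, ∃ u ∈ cent K e, ⁅t, u⁆ = z})
    (x : L) (hx : x ∈ cent K f) (hxT : ∀ t ∈ T, ⁅t, x⁆ = 0)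
    (hinj : ∀ v ∈ Submodule.span K {z : L | ∃ t ∈ T, ∃ u ∈ cent K e, ⁅t, u⁆ = z},
      (∀ w ∈ cent K e, killingForm K L w ⁅v, x⁆ = 0) → v = 0) :
    ∀ v : L, v ∈ coadStabE (K := K) e x ↔
      (v ∈ cent K e ∧ v ∈ centT T ∧
        ∀ w ∈ cent K e, w ∈ centT T → killingForm K L x ⁅v, w⁆ = 0) := by
  intro v
  have tcent : ∀ t ∈ T, t ∈ cent K e ∧ ⁅t, e⁆ = 0 := by
    intro t htT
    obtain ⟨y, hyH, hyt⟩ := hT htT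
    have : t = (y : L) := hyt.symm
    subst this
    have h1 := y.2
    rw [LieSubalgebra.mem_inf] at h1
    exact ⟨h1.1, h1.1⟩
  constructor
  · rintro ⟨hve, hv⟩
    have hvT : v ∈ centT T := by
      intro t htT
      have hte := (tcent t htT).1
      have key : ⁅t, v⁆ = 0 := by
        apply hinj ⁅t, v⁆ (Submodule.subset_span ⟨t, htT, v, hve, rfl⟩)
        intro w hw
        have h1 : ⁅⁅t, v⁆, x⁆ = ⁅t, ⁅v, x⁆⁆ := by
          rw [lie_lie, hxT t htT, lie_zero, sub_zero]
        rw [h1, ← LieModule.traceForm_apply_lie_apply K L L w t ⁅v, x⁆,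
          ← LieModule.traceForm_apply_lie_apply K L L ⁅w, t⁆ v x,
          LieModule.traceForm_comm]
        have hw' : ⁅w, t⁆ ∈ cent K e := (centLie K e).lie_mem hw hte
        have h4 : ⁅⁅w, t⁆, v⁆ = -⁅v, ⁅w, t⁆⁆ := (lie_skew _ _).symm
        rw [h4, map_neg, hv _ hw', neg_zero]
      simpa using key
    exact ⟨hve, hvT, fun w hw _ => hv w hw⟩
  · rintro ⟨hve, hvT, hv⟩
    refine ⟨hve, fun w hw => ?_⟩
    have hspan : Submodule.span K {z : L | ∃ t ∈ T, ∃ u ∈ cent K e, ⁅t, u⁆ = z} ≤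
        LinearMap.ker ((killingForm K L x).comp (LieAlgebra.ad K L v)) := by
      rw [Submodule.span_le]
      rintro _ ⟨t, htT, u, hu, rfl⟩
      simp only [SetLike.mem_coe, LinearMap.mem_ker, LinearMap.comp_apply,
        LieAlgebra.ad_apply]
      have hvt : ⁅v, t⁆ = 0 := by
        have := hvT t htT
        simp only [LinearMap.zero_apply, zero_smul] at this
        rw [← lie_skew, this, neg_zero]
      have h1 : ⁅v, ⁅t, u⁆⁆ = ⁅t, ⁅v, u⁆⁆ := by
        rw [leibniz_lie, hvt, zero_lie, zero_add]
      have hxt : ⁅x, t⁆ = 0 := by rw [← lie_skew, hxT t htT, neg_zero]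
      rw [h1, ← LieModule.traceForm_apply_lie_apply K L L x t ⁅v, u⁆, hxt,
        map_zero, LinearMap.zero_apply]
    obtain ⟨a, ha, s, hs, rfl⟩ := Submodule.mem_sup.mp (hdec hw)
    have hs0 : killingForm K L x ⁅v, s⁆ = 0 := by
      have := hspan hs
      simpa using this
    rw [lie_add, map_add, hs0, add_zero]
    exact hv a ha.2 ha.1
end
end

section
/- Let 𝔤 be a simple Lie algebra with sl₂-triple (e,h,f) and 𝔱 a Cartan subalgebra of 𝔩 = 𝔤(e) ∩ 𝔤(f), 𝔞 the centralizer of 𝔱 in 𝔤. Then for every simple ideal 𝔞₁ of 𝔞, the component e₁ of e on 𝔞₁ is a distinguished nilpotent element of 𝔞₁, i.e. the centralizer of e₁ in 𝔞₁ contains no nonzero semisimple element. -/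
noncomputable section

variable {K : Type} [Field K] [IsAlgClosed K] [CharZero K]
variable {L : Type} [LieRing L] [LieAlgebra K L] [Module.Finite K L]

set_option linter.unusedSectionVars false

open LieModule

namespace Statement12Aux

variable {K : Type} [Field K] [IsAlgClosed K] [CharZero K]
variable {L : Type} [LieRing L] [LieAlgebra K L] [Module.Finite K L]
variable {h e f : L}

lemma lie_e_lie_h (ht : IsSl2Triple h e f) {x : L} (hx : ⁅e, x⁆ = 0) : ⁅e, ⁅h, x⁆⁆ = 0 := by
  have h1 : ⁅e, h⁆ = -(2 • e) := by rw [← lie_skew, ht.lie_h_e_nsmul]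
  rw [leibniz_lie, hx, lie_zero, add_zero, h1]
  simp [hx]

lemma lie_h_eq_zero_and_lie_f_eq_zero (ht : IsSl2Triple h e f) :
    ∀ k : ℕ, ∀ x : L, ⁅e, x⁆ = 0 → ((toEnd K L L h) ^ k) x = 0 →
      ⁅h, x⁆ = 0 ∧ ⁅f, x⁆ = 0 := by
  intro k
  induction k using Nat.strong_induction_on with
  | _ k IH =>
  match k with
  | 0 =>
    intro x hxe hx0
    simp only [pow_zero, Module.End.one_apply] at hx0
    simp [hx0]
  | (k+1) =>
    intro x hxe hxk
    rcases eq_or_ne x 0 with rfl | hx0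
    · simp
    set x₁ := ⁅h, x⁆ with hx₁
    have h1e : ⁅e, x₁⁆ = 0 := lie_e_lie_h ht hxe
    have h1k : ((toEnd K L L h) ^ k) x₁ = 0 := by
      have heq : ((toEnd K L L h) ^ (k+1)) x = ((toEnd K L L h) ^ k) ((toEnd K L L h) x) := by
        rw [pow_succ, Module.End.mul_apply]
      rw [heq, toEnd_apply_apply] at hxk
      exact hxk
    obtain ⟨hh1, hf1⟩ := IH k (Nat.lt_succ_self k) x₁ h1e h1k
    set F := toEnd K L L f with hF
    have hFx₁ : F x₁ = 0 := by rw [hF, toEnd_apply_apply]; exact hf1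
    have hFnx₁ : ∀ n : ℕ, (F ^ (n+1)) x₁ = 0 := by
      intro n; rw [pow_succ, Module.End.mul_apply, hFx₁, map_zero]
    have hstep : ∀ (z : L) (n : ℕ), (F ^ (n+1)) z = ⁅f, (F ^ n) z⁆ := by
      intro z n; rw [pow_succ', Module.End.mul_apply, hF, toEnd_apply_apply]
    have claim_h : ∀ n : ℕ, ⁅h, (F ^ n) x⁆ = (-(2*(n:K))) • (F ^ n) x + (F ^ n) x₁ := by
      intro n
      induction n with
      | zero => simp [hx₁]
      | succ n ih =>
        rw [hstep x n, hstep x₁ n, leibniz_lie h f, ht.lie_lie_smul_f K, ih, lie_add, lie_smul]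
        simp only [neg_lie, smul_lie, neg_smul]
        push_cast
        module
    have claim_h' : ∀ n : ℕ, ⁅h, (F ^ (n+1)) x⁆ = (-(2*((n:K)+1))) • (F ^ (n+1)) x := by
      intro n
      rw [claim_h (n+1), hFnx₁ n, add_zero]
      push_cast
      module
    have claim_e1 : ⁅e, (F ^ 1) x⁆ = x₁ := by
      rw [pow_one, hF, toEnd_apply_apply, leibniz_lie e f x, ht.lie_e_f, hxe, lie_zero, add_zero]
    have claim_e : ∀ n : ℕ, ⁅e, (F ^ (n+2)) x⁆ = (-(((n:K)+1)*((n:K)+2))) • (F ^ (n+1)) x := by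
      intro n
      induction n with
      | zero =>
        rw [show (2:ℕ) = 1 + 1 from rfl, hstep x 1, leibniz_lie e f _, ht.lie_e_f, claim_h' 0,
          claim_e1, hf1]
        push_cast
        module
      | succ n ih =>
        rw [show n + 1 + 2 = (n+2) + 1 from rfl, hstep x (n+2), leibniz_lie e f _, ht.lie_e_f,
          claim_h' (n+1), ih, lie_smul, ← hstep x (n+1)]
        push_cast
        module
    have claim_fin : ∃ n : ℕ, (F ^ n) x = 0 := by
      by_contra hcon
      push_neg at hcon
      have hinj : Function.Injective (fun n : ℕ => (-(2*((n:K)+1)))) := by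
        intro a b hab
        simp only at hab
        have h2 : (2:K) ≠ 0 := two_ne_zero
        have hab' := mul_left_cancel₀ h2 (neg_injective hab)
        have : (a:K) = (b:K) := by linear_combination hab'
        exact_mod_cast this
      have hs : (Set.range fun n : ℕ => (-(2*((n:K)+1)))).Infinite := by
        rw [Set.infinite_range_iff hinj]; infer_instance
      refine hs ((toEnd K L L h).eigenvectors_linearIndependent
        (Set.range fun n : ℕ => (-(2*((n:K)+1))))
        (fun μ => (F ^ (Classical.choose μ.2 + 1)) x) (fun μ => ?_)).finite
      have hspec := Classical.choose_spec μ.2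
      constructor
      · rw [Module.End.mem_eigenspace_iff, toEnd_apply_apply, claim_h' (Classical.choose μ.2)]
        simp only at hspec
        rw [hspec]
      · exact hcon _
    obtain ⟨n, hn1, hn2⟩ := Nat.exists_not_and_succ_of_not_zero_of_exists
      (p := fun n => (F ^ n) x = 0) (by simpa using hx0) claim_fin
    match n, hn1, hn2 with
    | 0, _, hn2 =>
      rw [zero_add] at hn2
      have hfx : ⁅f, x⁆ = 0 := by
        have := hn2; rw [pow_one, hF, toEnd_apply_apply] at this; exact this
      have hx₁0 : x₁ = 0 := by rw [← claim_e1, hn2, lie_zero]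
      exact ⟨hx₁0, hfx⟩
    | (m+1), hn1, hn2 =>
      exfalso
      have hce := claim_e m
      rw [show m + 2 = m + 1 + 1 from rfl, hn2, lie_zero] at hce
      have hc : (-(((m:K)+1)*((m:K)+2))) ≠ 0 := by
        refine neg_ne_zero.mpr (mul_ne_zero (Nat.cast_add_one_ne_zero m) ?_)
        have : ((m:K)+2) = (((m+1:ℕ)):K)+1 := by push_cast; ring
        rw [this]
        exact Nat.cast_add_one_ne_zero (m+1)
      exact hn1 ((smul_eq_zero.mp hce.symm).resolve_left hc)

lemma eigenvalue_nat (ht : IsSl2Triple h e f) {x : L} {μ : K}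
    (hmem : ∃ k : ℕ, (((toEnd K L L h) - μ • 1) ^ k) x = 0)
    (hxe : ⁅e, x⁆ = 0) (hx0 : x ≠ 0) : ∃ n : ℕ, μ = n := by
  classical
  set G : Module.End K L := (toEnd K L L h) - μ • 1 with hG
  have hGapp : ∀ z : L, G z = ⁅h, z⁆ - μ • z := by
    intro z
    simp [hG, toEnd_apply_apply]
  have hGe : ∀ j : ℕ, ⁅e, (G ^ j) x⁆ = 0 := by
    intro j
    induction j with
    | zero => simpa using hxe
    | succ j ih =>
      have : (G ^ (j+1)) x = G ((G ^ j) x) := by rw [pow_succ', Module.End.mul_apply]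
      rw [this, hGapp, lie_sub, lie_smul, ih, lie_e_lie_h ht ih]
      simp
  have hk : ∃ k : ℕ, (G ^ k) x = 0 := hmem
  set k₀ := Nat.find hk with hk₀
  have hk₀pos : k₀ ≠ 0 := by
    intro h0
    have hsp := Nat.find_spec hk
    rw [← hk₀, h0] at hsp
    simp only [pow_zero, Module.End.one_apply] at hsp
    exact hx0 hsp
  set y := (G ^ (k₀ - 1)) x with hy
  have hy0 : y ≠ 0 := by
    intro hy0
    exact Nat.find_min hk (Nat.sub_lt (Nat.pos_of_ne_zero hk₀pos) one_pos) hy0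
  have hGy : G y = 0 := by
    have : G ((G ^ (k₀ - 1)) x) = (G ^ k₀) x := by
      conv_rhs => rw [show k₀ = (k₀ - 1) + 1 from (Nat.succ_pred_eq_of_pos
        (Nat.pos_of_ne_zero hk₀pos)).symm]
      rw [pow_succ', Module.End.mul_apply]
    rw [hy, this]
    exact Nat.find_spec hk
  have hlieh : ⁅h, y⁆ = μ • y := by
    have := hGy
    rw [hGapp, sub_eq_zero] at this
    exact this
  have P : ht.HasPrimitiveVectorWith y μ := ⟨hy0, hlieh, hGe (k₀ - 1)⟩
  exact P.exists_nat

lemma nilpotent_of_shift {A N : Module.End K L}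
    (hA : ⨆ μ : K, A.maxGenEigenspace μ = ⊤)
    (hN : ∀ (μ : K), ∀ x ∈ A.maxGenEigenspace μ,
      N x ∈ ⨆ n : {n : ℕ // 1 ≤ n}, A.maxGenEigenspace (μ + ((n : ℕ) : K))) :
    ∃ m : ℕ, N ^ m = 0 := by
  classical
  set S : Set K := {μ | A.maxGenEigenspace μ ≠ ⊥} with hS
  have hSfin : S.Finite := by
    apply (Module.End.finite_hasEigenvalue A).subset
    intro μ hμ
    rw [hS, Set.mem_setOf_eq, Module.End.maxGenEigenspace_eq] at hμ
    exact Module.End.hasEigenvalue_of_hasGenEigenvalue hμ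
  set T : Set ℕ := {n | ∃ μ, μ ∈ S ∧ μ + (n : K) ∈ S} with hT
  have hTfin : T.Finite := by
    have hsub : T ⊆ (fun p : K × K =>
        if hn : ∃ n : ℕ, p.1 + (n : K) = p.2 then hn.choose else 0) '' (S ×ˢ S) := by
      rintro n ⟨μ, hμ1, hμ2⟩
      refine ⟨(μ, μ + (n : K)), Set.mk_mem_prod hμ1 hμ2, ?_⟩
      have hex : ∃ m : ℕ, μ + (m : K) = μ + (n : K) := ⟨n, rfl⟩
      simp only [dif_pos hex]
      have hcs := hex.choose_spec
      have h2 : (hex.choose : K) = (n : K) := by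
        exact add_left_cancel hcs
      exact_mod_cast h2
    exact (((hSfin.prod hSfin).image _).subset hsub)
  set bound : ℕ := hTfin.toFinset.sup id + 1 with hbound
  have hbig : ∀ n : ℕ, bound ≤ n → n ∉ T := by
    intro n hn hnT
    have : id n ≤ hTfin.toFinset.sup id := Finset.le_sup (hTfin.mem_toFinset.mpr hnT)
    simp only [id] at this
    omega
  have key : ∀ (k : ℕ) (μ : K), ∀ x ∈ A.maxGenEigenspace μ,
      (N ^ k) x ∈ ⨆ n : {n : ℕ // k ≤ n}, A.maxGenEigenspace (μ + ((n : ℕ) : K)) := by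
    intro k
    induction k with
    | zero =>
      intro μ x hx
      apply Submodule.mem_iSup_of_mem (⟨0, le_refl 0⟩ : {n : ℕ // 0 ≤ n})
      simpa using hx
    | succ k ih =>
      intro μ x hx
      have hx' := ih μ x hx
      have hpow : (N ^ (k+1)) x = N ((N ^ k) x) := by rw [pow_succ', Module.End.mul_apply]
      rw [hpow]
      refine Submodule.iSup_induction
        (motive := fun z : L => N z ∈ ⨆ n : {n : ℕ // k + 1 ≤ n}, A.maxGenEigenspace (μ + ((n : ℕ) : K)))
        _ hx' (fun n y hy => ?_) (by simp) (fun y z hy hz => by simp only [map_add]; exact add_mem hy hz)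
      have hmem := hN (μ + ((n : ℕ) : K)) y hy
      have hle : (⨆ m : {m : ℕ // 1 ≤ m}, A.maxGenEigenspace ((μ + ((n : ℕ) : K)) + ((m : ℕ) : K)))
          ≤ ⨆ n' : {n' : ℕ // k + 1 ≤ n'}, A.maxGenEigenspace (μ + ((n' : ℕ) : K)) := by
        refine iSup_le fun m => ?_
        have hcast : (μ + ((n : ℕ) : K)) + ((m : ℕ) : K) = μ + ((((n : ℕ) + (m : ℕ) : ℕ)) : K) := by
          push_cast; ring
        rw [hcast]
        exact le_iSup (fun n' : {n' : ℕ // k + 1 ≤ n'} => A.maxGenEigenspace (μ + ((n' : ℕ) : K)))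
          ⟨(n : ℕ) + (m : ℕ), by have := n.2; have := m.2; omega⟩
      exact hle hmem
  refine ⟨bound, ?_⟩
  ext x
  have hx : x ∈ (⊤ : Submodule K L) := trivial
  rw [← hA] at hx
  simp only [LinearMap.zero_apply]
  refine Submodule.iSup_induction (motive := fun z : L => (N ^ bound) z = 0)
    _ hx (fun μ y hy => ?_) (by simp) (fun y z hy hz => by simp only [map_add, hy, hz, add_zero])
  by_cases hμ : A.maxGenEigenspace μ = ⊥
  · rw [hμ] at hy
    simp only [Submodule.mem_bot] at hy
    simp [hy]
  · have hmem := key bound μ y hy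
    have hbot : (⨆ n : {n : ℕ // bound ≤ n}, A.maxGenEigenspace (μ + ((n : ℕ) : K))) = ⊥ := by
      refine le_bot_iff.mp (iSup_le fun n => ?_)
      by_cases hn : A.maxGenEigenspace (μ + ((n : ℕ) : K)) = ⊥
      · simp [hn]
      · exact absurd ⟨μ, hμ, hn⟩ (hbig n n.2)
    rw [hbot] at hmem
    simpa using hmem

end Statement12Aux



/-- `𝔤` simple, `(e,h,f)` an `sl₂`-triple, `𝔱` a Cartan subalgebra of
`𝔩 = 𝔤(e) ∩ 𝔤(f)`, `𝔞 = 𝔤^𝔱` the centralizer of `𝔱`.  For every simple ideal `𝔞₁` of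
`𝔞`, the component `e₁` of `e` on `𝔞₁` is a distinguished nilpotent element of `𝔞₁`:
the centralizer of `e₁` in `𝔞₁` contains no nonzero semisimple element. -/
theorem statement12 [LieAlgebra.IsSimple K L] {h e f : L} (ht : IsSl2Triple h e f)
    (T : Submodule K L)
    (H : LieSubalgebra K ↥(centLie K e ⊓ centLie K f)) [H.IsCartanSubalgebra]
    (hT : T = Submodule.map ((centLie K e ⊓ centLie K f).incl.toLinearMap) H.toSubmodule)
    -- `𝔞₁`: a simple ideal of `𝔞 = centT T`
    (a1 : Submodule K L) (ha1 : a1 ≤ centT T)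
    (hideal : ∀ u ∈ centT T, ∀ v ∈ a1, ⁅u, v⁆ ∈ a1)
    (hnonab : ∃ u ∈ a1, ∃ v ∈ a1, ⁅u, v⁆ ≠ 0)
    (hsimple : ∀ s : Submodule K L, s ≤ a1 →
      (∀ u ∈ a1, ∀ v ∈ s, ⁅u, v⁆ ∈ s) → s = ⊥ ∨ s = a1)
    -- `e₁`: the component of `e` on `𝔞₁`
    (e1 : L) (he1 : e1 ∈ a1) (hcomp : ∀ v ∈ a1, ⁅e - e1, v⁆ = 0) :
    ∀ s ∈ a1, ⁅s, e1⁆ = 0 → (LieAlgebra.ad K L s).IsSemisimple → s = 0 := by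
  intro s hs hse1 hsem
  classical
  have hmemT : ∀ {v : L}, v ∈ centT T ↔ ∀ t ∈ T, ⁅t, v⁆ = 0 := by
    intro v
    have h0 : v ∈ centT T ↔ ∀ t ∈ T, ⁅t, v⁆ = (0 : Module.Dual K L) t • v := Iff.rfl
    simp only [h0, LinearMap.zero_apply, zero_smul]
  have hmemC : ∀ {v : L}, v ∈ cent K e ↔ ⁅v, e⁆ = 0 := fun {v} => Iff.rfl
  have hTef : ∀ t ∈ T, ⁅t, e⁆ = 0 ∧ ⁅t, f⁆ = 0 := by
    intro t htT
    rw [hT] at htT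
    obtain ⟨y, hyH, rfl⟩ := htT
    have hy := y.2
    rw [LieSubalgebra.mem_inf] at hy
    exact ⟨hy.1, hy.2⟩
  have hTh : ∀ t ∈ T, ⁅t, h⁆ = 0 := by
    intro t htT
    obtain ⟨hte, htf⟩ := hTef t htT
    rw [← ht.lie_e_f, leibniz_lie, hte, htf, zero_lie, lie_zero, add_zero]
  have hhT : h ∈ centT T := hmemT.mpr hTh
  have hsT : s ∈ centT T := ha1 hs
  have hse : ⁅s, e⁆ = 0 := by
    have h1 : ⁅s, e - e1⁆ = 0 := by
      rw [← lie_skew, hcomp s hs, neg_zero]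
    have h2 : ⁅s, e⁆ = ⁅s, e1⁆ + ⁅s, e - e1⁆ := by
      rw [← lie_add]
      congr 1
      abel
    rw [h2, hse1, h1, add_zero]
  set V : Submodule K L := a1 ⊓ (cent K e ⊓ centT T) with hV
  have hVsplit : ∀ {x : L}, x ∈ V → x ∈ a1 ∧ ⁅x, e⁆ = 0 ∧ x ∈ centT T := by
    intro x hx
    rw [hV, Submodule.mem_inf, Submodule.mem_inf] at hx
    exact ⟨hx.1, hmemC.mp hx.2.1, hx.2.2⟩
  have hsV : s ∈ V := by
    rw [hV]
    exact Submodule.mem_inf.mpr ⟨hs, Submodule.mem_inf.mpr ⟨hmemC.mpr hse, hsT⟩⟩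
  have hVh : ∀ x ∈ V, (LieModule.toEnd K L L h) x ∈ V := by
    intro x hx
    obtain ⟨hxa, hxe, hxT⟩ := hVsplit hx
    rw [LieModule.toEnd_apply_apply, hV]
    refine Submodule.mem_inf.mpr ⟨hideal h hhT x hxa, Submodule.mem_inf.mpr ⟨?_, ?_⟩⟩
    · show ⁅⁅h, x⁆, e⁆ = 0
      rw [lie_lie, hxe, lie_zero, ht.lie_h_e_smul K, lie_smul, hxe, smul_zero, sub_zero]
    · refine hmemT.mpr fun t htT => ?_
      rw [leibniz_lie, hTh t htT, zero_lie, zero_add, hmemT.mp hxT t htT, lie_zero]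
  have htrans : ∀ (μ : K) (z : ↥V), z ∈ Module.End.maxGenEigenspace ((LieModule.toEnd K L L h).restrict hVh) μ
      ↔ ∃ k : ℕ, (((LieModule.toEnd K L L h) - μ • 1) ^ k) (z : L) = 0 := by
    intro μ z
    have hsub : (LieModule.toEnd K L L h).restrict hVh - (μ • 1 : Module.End K L).restrict
        (fun _ hx => V.smul_mem μ hx) = ((LieModule.toEnd K L L h) - μ • 1).restrict
        (fun x hx => V.sub_mem (hVh x hx) (V.smul_mem μ hx)) := by
      ext; simp
    simp_rw [Module.End.mem_maxGenEigenspace, ← LinearMap.restrict_smul_one _,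
      hsub, Module.End.pow_restrict _, LinearMap.restrict_apply,
      Submodule.mk_eq_zero]
  have hstop : (⟨s, hsV⟩ : V) ∈ Module.End.maxGenEigenspace ((LieModule.toEnd K L L h).restrict hVh) 0 ⊔
      ⨆ μ : {μ : K // μ ≠ 0}, Module.End.maxGenEigenspace ((LieModule.toEnd K L L h).restrict hVh) μ.1 := by
    have hmem : (⟨s, hsV⟩ : V) ∈ (⊤ : Submodule K ↥V) := trivial
    rw [← Module.End.iSup_maxGenEigenspace_eq_top ((LieModule.toEnd K L L h).restrict hVh)]
      at hmem
    have hle : (⨆ μ : K, Module.End.maxGenEigenspace ((LieModule.toEnd K L L h).restrict hVh) μ) ≤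
        Module.End.maxGenEigenspace ((LieModule.toEnd K L L h).restrict hVh) 0 ⊔
        ⨆ μ : {μ : K // μ ≠ 0}, Module.End.maxGenEigenspace ((LieModule.toEnd K L L h).restrict hVh) μ.1 := by
      refine iSup_le fun μ => ?_
      rcases eq_or_ne μ 0 with rfl | hμ0
      · exact le_sup_left
      · exact le_trans (le_iSup (fun μ : {μ : K // μ ≠ 0} =>
          Module.End.maxGenEigenspace ((LieModule.toEnd K L L h).restrict hVh) μ.1) ⟨μ, hμ0⟩) le_sup_right
    exact hle hmem
  obtain ⟨u0, hu0, u1, hu1, hsum⟩ := Submodule.mem_sup.mp hstop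
  have hss : (u0 : L) + (u1 : L) = s := congrArg Subtype.val hsum
  obtain ⟨hs0a1, hs0e, hs0T⟩ := hVsplit u0.2
  have hs0gen : ∃ k : ℕ, ((LieModule.toEnd K L L h) ^ k) (u0 : L) = 0 := by
    obtain ⟨k, hk⟩ := (htrans 0 u0).mp hu0
    refine ⟨k, ?_⟩
    simp only [zero_smul, sub_zero] at hk
    exact hk
  obtain ⟨k0, hk0⟩ := hs0gen
  have hes0 : ⁅e, (u0 : L)⁆ = 0 := by rw [← lie_skew, hs0e, neg_zero]
  obtain ⟨hh0, hf0⟩ := Statement12Aux.lie_h_eq_zero_and_lie_f_eq_zero ht k0 (u0 : L) hes0 hk0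
  have hs0LF : (u0 : L) ∈ centLie K e ⊓ centLie K f := by
    rw [LieSubalgebra.mem_inf]
    exact ⟨hs0e, show ⁅(u0 : L), f⁆ = 0 by rw [← lie_skew, hf0, neg_zero]⟩
  have hσH : (⟨(u0 : L), hs0LF⟩ : ↥(centLie K e ⊓ centLie K f)) ∈ H := by
    rw [← LieSubalgebra.IsCartanSubalgebra.self_normalizing (H := H),
      LieSubalgebra.mem_normalizer_iff]
    intro y hyH
    have hyT : (y : L) ∈ T := by rw [hT]; exact ⟨y, hyH, rfl⟩
    have hy0 : ⁅(y : L), (u0 : L)⁆ = 0 := hmemT.mp hs0T _ hyT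
    have hbr : ⁅(⟨(u0 : L), hs0LF⟩ : ↥(centLie K e ⊓ centLie K f)), y⁆ = 0 := by
      apply Subtype.ext
      show ⁅(u0 : L), (y : L)⁆ = 0
      rw [← lie_skew, hy0, neg_zero]
    rw [hbr]
    exact H.zero_mem
  have hs0T' : (u0 : L) ∈ T := by
    rw [hT]
    exact ⟨⟨(u0 : L), hs0LF⟩, hσH, rfl⟩
  have hs0kill : ∀ v ∈ a1, ⁅(u0 : L), v⁆ = 0 := fun v hv => hmemT.mp (ha1 hv) _ hs0T'
  have hs1W : (u1 : L) ∈ ⨆ n : {n : ℕ // 1 ≤ n},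
      (LieModule.toEnd K L L h).maxGenEigenspace ((n : ℕ) : K) := by
    refine Submodule.iSup_induction
      (motive := fun z : ↥V => (z : L) ∈ ⨆ n : {n : ℕ // 1 ≤ n},
        (LieModule.toEnd K L L h).maxGenEigenspace ((n : ℕ) : K))
      _ hu1 (fun μ z hz => ?_) (by simp)
      (fun y z hy hz => by simp only [Submodule.coe_add]; exact add_mem hy hz)
    rcases eq_or_ne (z : L) 0 with h0 | h0
    · simp [h0]
    · obtain ⟨hza1, hze, hzT⟩ := hVsplit z.2
      obtain ⟨n, hn⟩ := Statement12Aux.eigenvalue_nat ht ((htrans μ.1 z).mp hz)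
        (by rw [← lie_skew, hze, neg_zero]) h0
      have hn1 : 1 ≤ n := by
        rcases Nat.eq_zero_or_pos n with rfl | hpos
        · exact absurd (by simpa using hn) μ.2
        · exact hpos
      refine Submodule.mem_iSup_of_mem (⟨n, hn1⟩ : {n : ℕ // 1 ≤ n}) ?_
      have hmem : (z : L) ∈ (LieModule.toEnd K L L h).maxGenEigenspace μ.1 := by
        rw [Module.End.mem_maxGenEigenspace]
        exact (htrans μ.1 z).mp hz
      rwa [hn] at hmem
  have hNmaps : ∀ (ν : K), ∀ w ∈ (LieModule.toEnd K L L h).maxGenEigenspace ν,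
      (LieModule.toEnd K L L (u1 : L)) w ∈ ⨆ n : {n : ℕ // 1 ≤ n},
        (LieModule.toEnd K L L h).maxGenEigenspace (ν + ((n : ℕ) : K)) := by
    intro ν w hw
    rw [LieModule.toEnd_apply_apply]
    refine Submodule.iSup_induction
      (motive := fun z : L => ⁅z, w⁆ ∈ ⨆ n : {n : ℕ // 1 ≤ n},
        (LieModule.toEnd K L L h).maxGenEigenspace (ν + ((n : ℕ) : K)))
      _ hs1W (fun n z hz => ?_) (by simp)
      (fun y z hy hz => by simp only [add_lie]; exact add_mem hy hz)
    have hb := LieModule.lie_mem_maxGenEigenspace_toEnd (R := K) (L := L) (M := L) hz hw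
    rw [add_comm ((n : ℕ) : K) ν] at hb
    exact Submodule.mem_iSup_of_mem n hb
  obtain ⟨m, hm⟩ := Statement12Aux.nilpotent_of_shift (A := LieModule.toEnd K L L h)
    (N := LieModule.toEnd K L L (u1 : L))
    (Module.End.iSup_maxGenEigenspace_eq_top _) hNmaps
  have hs1eq : ∀ v ∈ a1, ⁅s, v⁆ = ⁅(u1 : L), v⁆ := by
    intro v hv
    rw [← hss, add_lie, hs0kill v hv, zero_add]
  have ha1inv : ∀ v ∈ a1, (LieAlgebra.ad K L s) v ∈ a1 := by
    intro v hv
    rw [LieAlgebra.ad_apply]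
    exact hideal s hsT v hv
  have hiter : ∀ (k : ℕ) (v : L), v ∈ a1 →
      ((LieAlgebra.ad K L s) ^ k) v ∈ a1 ∧
      ((LieAlgebra.ad K L s) ^ k) v = ((LieModule.toEnd K L L (u1 : L)) ^ k) v := by
    intro k
    induction k with
    | zero =>
      intro v hv
      refine ⟨?_, ?_⟩ <;> simp [hv]
    | succ k ihk =>
      intro v hv
      obtain ⟨hmem, heq⟩ := ihk v hv
      have h1 : ((LieAlgebra.ad K L s) ^ (k + 1)) v = ⁅s, ((LieAlgebra.ad K L s) ^ k) v⁆ := by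
        rw [pow_succ', Module.End.mul_apply, LieAlgebra.ad_apply]
      have h2 : ((LieModule.toEnd K L L (u1 : L)) ^ (k + 1)) v
          = ⁅(u1 : L), ((LieModule.toEnd K L L (u1 : L)) ^ k) v⁆ := by
        rw [pow_succ', Module.End.mul_apply, LieModule.toEnd_apply_apply]
      refine ⟨?_, ?_⟩
      · rw [h1]
        exact hideal s hsT _ hmem
      · rw [h1, h2, ← heq, hs1eq _ hmem]
  have hR : ((LieAlgebra.ad K L s).restrict ha1inv) = 0 := by
    have hnil : IsNilpotent ((LieAlgebra.ad K L s).restrict ha1inv) := by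
      refine ⟨m, ?_⟩
      ext z
      rw [Module.End.pow_restrict]
      rw [LinearMap.restrict_coe_apply]
      rw [(hiter m (z : L) z.2).2, hm]
      simp
    have hinvt : a1 ∈ (LieAlgebra.ad K L s).invtSubmodule := fun x hx => ha1inv x hx
    have hssr : Module.End.IsSemisimple ((LieAlgebra.ad K L s).restrict ha1inv) :=
      Module.End.IsSemisimple.restrict hinvt hsem
    exact Module.End.eq_zero_of_isNilpotent_isSemisimple hnil hssr
  have hskill : ∀ v ∈ a1, ⁅s, v⁆ = 0 := by
    intro v hv
    have h2 : ((LieAlgebra.ad K L s).restrict ha1inv) ⟨v, hv⟩ = 0 := by rw [hR]; rfl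
    have h3 := congrArg Subtype.val h2
    simp only [LinearMap.restrict_apply, ZeroMemClass.coe_zero] at h3
    simpa [LieAlgebra.ad_apply] using h3
  have hid : ∀ u ∈ a1, ∀ w ∈ Submodule.span K {s}, ⁅u, w⁆ ∈ Submodule.span K {s} := by
    intro u hu w hw
    obtain ⟨c, rfl⟩ := Submodule.mem_span_singleton.mp hw
    have hus : ⁅u, s⁆ = 0 := by rw [← lie_skew, hskill u hu, neg_zero]
    rw [lie_smul, hus, smul_zero]
    exact Submodule.zero_mem _
  rcases hsimple (Submodule.span K {s}) (Submodule.span_le.mpr (by simpa using hs)) hid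
    with hbot | htopa
  · exact Submodule.span_singleton_eq_bot.mp hbot
  · exfalso
    obtain ⟨u, hu, v, hv, huv⟩ := hnonab
    rw [← htopa] at hu hv
    obtain ⟨c, rfl⟩ := Submodule.mem_span_singleton.mp hu
    obtain ⟨d, rfl⟩ := Submodule.mem_span_singleton.mp hv
    apply huv
    rw [lie_smul, smul_lie, lie_self, smul_zero, smul_zero]
end
end

section
/- Setup as above: λ a nonzero 𝔱-weight on 𝔤(e), bases (vᵢ) of E_λ and (wⱼ) of E_{-λ}, δ_λ = det([vᵢ,wⱼ]) ∈ S(𝔞(e)). For x ∈ 𝔞(f), the intersection E_λ ∩ 𝔤(e)(x) is zero if and only if δ_λ(x) ≠ 0, where δ_λ(x) denotes evaluation of the polynomial δ_λ at the linear form on 𝔞(e) given by x via the Killing form. -/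
noncomputable section

variable {K : Type} [Field K] [IsAlgClosed K] [CharZero K]
variable {L : Type} [LieRing L] [LieAlgebra K L] [Module.Finite K L]

/-- Weight space indexed by functionals on `T`. -/
def wtT (T : Submodule K L) (nu : Module.Dual K ↥T) : Submodule K L where
  carrier := {v : L | ∀ t : T, ⁅(t : L), v⁆ = nu t • v}
  add_mem' := by
    intro a b ha hb t
    rw [Set.mem_setOf_eq] at ha hb
    rw [lie_add, ha t, hb t, smul_add]
  zero_mem' := by intro t; rw [lie_zero, smul_zero]
  smul_mem' := by
    intro c a ha t
    rw [Set.mem_setOf_eq] at ha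
    rw [lie_smul, ha t, smul_comm]

set_option linter.unusedSectionVars false in
lemma key_component (T : Submodule K L) (U : Submodule K L)
    (hU : ∀ (t : T), ∀ u ∈ U, ⁅(t : L), u⁆ ∈ U) :
    ∀ S : Finset (Module.Dual K ↥T), ∀ c : Module.Dual K ↥T → L,
      (∀ ν ∈ S, c ν ∈ wtT T ν) → (∑ ν ∈ S, c ν) ∈ U → ∀ ν ∈ S, c ν ∈ U := by
  classical
  intro S
  induction S using Finset.strongInduction with
  | _ S ih =>
    intro c hc hsum ν0 hν0
    by_cases hcase : S = {ν0}
    · subst hcase; simpa using hsum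
    · have hex : ∃ ν1 ∈ S, ν1 ≠ ν0 := by
        by_contra hcon; push_neg at hcon
        exact hcase (Finset.eq_singleton_iff_unique_mem.mpr ⟨hν0, hcon⟩)
      obtain ⟨ν1, hν1S, hν1⟩ := hex
      have hext : ∃ t : T, ν0 t ≠ ν1 t := by
        by_contra hcon; push_neg at hcon
        exact hν1 (LinearMap.ext fun t => (hcon t).symm)
      obtain ⟨t, htne⟩ := hext
      set c' : Module.Dual K ↥T → L := fun μ => (μ t - ν1 t) • c μ with hc'def
      have hsum' : (∑ μ ∈ S.erase ν1, c' μ) ∈ U := by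
        have h1 : c' ν1 = 0 := by simp [hc'def]
        rw [Finset.sum_erase _ h1]
        have h2 : (∑ μ ∈ S, c' μ) = ⁅(t : L), ∑ μ ∈ S, c μ⁆ - ν1 t • ∑ μ ∈ S, c μ := by
          have hl : ⁅(t : L), ∑ μ ∈ S, c μ⁆ = ∑ μ ∈ S, ⁅(t : L), c μ⁆ :=
            map_sum (LieAlgebra.ad K L (t : L)) c S
          rw [hl, Finset.smul_sum, ← Finset.sum_sub_distrib]
          refine Finset.sum_congr rfl fun μ hμ => ?_
          have h3 : ⁅(t : L), c μ⁆ = μ t • c μ := hc μ hμ t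
          show (μ t - ν1 t) • c μ = _
          rw [h3, sub_smul]
        rw [h2]
        exact Submodule.sub_mem _ (hU t _ hsum) (Submodule.smul_mem _ _ hsum)
      have hν0' : ν0 ∈ S.erase ν1 := Finset.mem_erase.mpr ⟨Ne.symm hν1, hν0⟩
      have hmem := ih (S.erase ν1) (Finset.erase_ssubset hν1S) c'
        (fun μ hμ => Submodule.smul_mem _ _ (hc μ (Finset.mem_of_mem_erase hμ))) hsum' ν0 hν0'
      have hne : ν0 t - ν1 t ≠ 0 := sub_ne_zero.mpr htne
      have := Submodule.smul_mem U (ν0 t - ν1 t)⁻¹ hmem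
      rwa [hc'def, smul_smul, inv_mul_cancel₀ hne, one_smul] at this

/-- Setup as before: `λ` a nonzero `𝔱`-weight on `𝔤(e)`, bases
`(vᵢ)` of `E_λ` and `(wⱼ)` of `E_{-λ}`, and `x ∈ 𝔞(f)`.  Then
`E_λ ∩ 𝔤(e)(x) = 0` iff `δ_λ(x) = det (⟨x, ⁅vᵢ, wⱼ⁆⟩) ≠ 0`, the pairing being the
Killing form. -/
theorem statement17 [LieAlgebra.IsSimple K L] {h e f : L} (ht : IsSl2Triple h e f)
    (T : Submodule K L) (hTl : T ≤ cent K e ⊓ cent K f)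
    (habel : ∀ t ∈ T, ∀ t' ∈ T, ⁅t, t'⁆ = 0)
    (hss : (⨆ mu : Module.Dual K L, wtSpace T mu) = ⊤)
    (lam : Module.Dual K L) (hlam : ∃ t ∈ T, lam t ≠ 0)
    {k : ℕ} (v w : Fin k → L)
    (hv : ∀ i, v i ∈ EwtE T e lam) (hvli : LinearIndependent K v)
    (hvsp : EwtE T e lam ≤ Submodule.span K (Set.range v))
    (hw : ∀ i, w i ∈ EwtE T e (-lam)) (hwli : LinearIndependent K w)
    (hwsp : EwtE T e (-lam) ≤ Submodule.span K (Set.range w))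
    (x : L) (hx : x ∈ cent K f) (hxT : ∀ t ∈ T, ⁅t, x⁆ = 0) :
    EwtE T e lam ⊓ coadStabE (K := K) e x = ⊥ ↔
      (Matrix.of fun i j => killingForm K L x ⁅v i, w j⁆).det ≠ 0 := by
  classical
  set M : Matrix (Fin k) (Fin k) K := Matrix.of fun i j => killingForm K L x ⁅v i, w j⁆ with hM
  -- evaluation of the pairing against a linear combination of the `v i`
  have hpair : ∀ (a : Fin k → K) (j : Fin k),
      killingForm K L x ⁅∑ i, a i • v i, w j⁆ = (Matrix.vecMul a M) j := by
    intro a j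
    have h1 : ⁅w j, ∑ i, a i • v i⁆ = ∑ i, ⁅w j, a i • v i⁆ :=
      map_sum (LieAlgebra.ad K L (w j)) _ Finset.univ
    have h2 : ⁅∑ i, a i • v i, w j⁆ = ∑ i, a i • ⁅v i, w j⁆ := by
      rw [← lie_skew, h1, ← Finset.sum_neg_distrib]
      refine Finset.sum_congr rfl fun i _ => ?_
      rw [lie_smul, ← smul_neg, lie_skew]
    rw [h2, map_sum]
    simp [Matrix.vecMul, dotProduct, hM, mul_comm]
  have hwcent : ∀ j, w j ∈ cent K e := fun j => (hw j).2
  -- the centralizer is T-invariant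
  have hcentinv : ∀ (t : T), ∀ u ∈ cent K e, ⁅(t : L), u⁆ ∈ cent K e := by
    intro t u hu
    have hte : ⁅(t : L), e⁆ = 0 := (hTl t.2).1
    have hue : ⁅u, e⁆ = 0 := hu
    show ⁅⁅(t : L), u⁆, e⁆ = 0
    rw [lie_lie, hue, hte, lie_zero, lie_zero, sub_zero]
  -- the Killing form pairing vanishes against components of weight ≠ -λ
  have hxt : ∀ t : T, ⁅x, (t : L)⁆ = 0 := by
    intro t
    rw [← lie_skew, hxT t t.2, neg_zero]
  constructor
  · -- intersection trivial → det ≠ 0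
    intro hbot hdet
    obtain ⟨a, ha0, haM⟩ := Matrix.exists_vecMul_eq_zero_iff.mpr hdet
    set u : L := ∑ i, a i • v i with hu
    have humem : u ∈ EwtE T e lam :=
      Submodule.sum_mem _ fun i _ => Submodule.smul_mem _ _ (hv i)
    have hustab : u ∈ coadStabE (K := K) e x := by
      refine ⟨humem.2, ?_⟩
      intro w' hw'
      -- decompose w' into weight components lying in `cent K e`
      have hwt' : w' ∈ ⨆ ν : Module.Dual K ↥T, wtT T ν := by
        have hle : (⨆ mu : Module.Dual K L, wtSpace T mu) ≤ ⨆ ν, wtT T ν := by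
          refine iSup_le fun mu => le_iSup_of_le (mu.comp T.subtype) ?_
          intro z hz t
          exact hz (t : L) t.2
        have : w' ∈ (⊤ : Submodule K L) := Submodule.mem_top
        rw [← hss] at this
        exact hle this
      obtain ⟨g, hg, hgsum⟩ := (Submodule.mem_iSup_iff_exists_finsupp _ _).mp hwt'
      have hgc : ∀ ν ∈ g.support, g ν ∈ cent K e :=
        key_component T (cent K e) hcentinv g.support g (fun ν _ => hg ν)
          (by rw [show (∑ ν ∈ g.support, g ν) = w' from hgsum]; exact hw')
      have hsum : w' = ∑ ν ∈ g.support, g ν := hgsum.symm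
      rw [hsum]
      have hls : ⁅u, ∑ ν ∈ g.support, g ν⁆ = ∑ ν ∈ g.support, ⁅u, g ν⁆ :=
        map_sum (LieAlgebra.ad K L u) g g.support
      rw [hls, map_sum]
      refine Finset.sum_eq_zero fun ν hν => ?_
      by_cases hcase : ∀ t : T, ν t = - lam (t : L)
      · -- component of weight -λ : lies in E_{-λ}, hence in span of the `w j`
        have hmem : g ν ∈ EwtE T e (-lam) := by
          refine ⟨?_, hgc ν hν⟩
          intro t ht
          have := hg ν ⟨t, ht⟩
          rw [this, hcase ⟨t, ht⟩]
          simp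
        obtain ⟨b, hb⟩ := (Submodule.mem_span_range_iff_exists_fun K).mp (hwsp hmem)
        rw [← hb]
        have h4 : ⁅u, ∑ j, b j • w j⁆ = ∑ j, ⁅u, b j • w j⁆ :=
          map_sum (LieAlgebra.ad K L u) _ Finset.univ
        rw [h4, map_sum]
        refine Finset.sum_eq_zero fun j _ => ?_
        rw [lie_smul, map_smul]
        have hz : killingForm K L x ⁅u, w j⁆ = 0 := by
          rw [hu, hpair a j, haM]
          rfl
        rw [hz, smul_zero]
      · -- component of weight ≠ -λ : invariance of the Killing form
        push_neg at hcase
        obtain ⟨t, htne⟩ := hcase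
        have hinv : killingForm K L x ⁅(t : L), ⁅u, g ν⁆⁆ = 0 := by
          rw [← LieModule.traceForm_apply_lie_apply, hxt t]
          simp
        have hbr : ⁅(t : L), ⁅u, g ν⁆⁆ = (lam (t : L) + ν t) • ⁅u, g ν⁆ := by
          rw [leibniz_lie, humem.1 (t : L) t.2, hg ν t, smul_lie, lie_smul, add_smul]
        rw [hbr, map_smul, smul_eq_mul] at hinv
        have hne : lam (t : L) + ν t ≠ 0 := by
          intro h0
          exact htne (by linear_combination h0)
        exact (mul_eq_zero.mp hinv).resolve_left hne
    have : u ∈ EwtE T e lam ⊓ coadStabE (K := K) e x := ⟨humem, hustab⟩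
    rw [hbot, Submodule.mem_bot] at this
    have := Fintype.linearIndependent_iff.mp hvli a (by rw [← hu, this])
    exact ha0 (funext this)
  · -- det ≠ 0 → intersection trivial
    intro hdet
    rw [Submodule.eq_bot_iff]
    rintro u ⟨humem, hustab⟩
    obtain ⟨a, ha⟩ := (Submodule.mem_span_range_iff_exists_fun K).mp (hvsp humem)
    have haM : Matrix.vecMul a M = 0 := by
      funext j
      rw [← hpair a j, ha]
      exact hustab.2 (w j) (hwcent j)
    have ha0 : a = 0 := by
      by_contra hcon
      exact hdet (Matrix.exists_vecMul_eq_zero_iff.mp ⟨a, hcon, haM⟩)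
    rw [← ha, ha0]
    simp
end
end
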